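/- arXiv:2302.02063 — 4 statements merged into one kernel-verified Lean document; each statement's English description precedes it below -/
import Mathlib

section
/- Let n ≥ 1 be an integer, σ > 0, s a real number with 2s + n > 0, and c > 0. Then there exist constants C > 0 and T₀ ≥ 1 such that for all t ≥ T₀, (∫_{|ξ| ≤ ε₀} |ξ|^{2s} e^{-2c|ξ|^{2σ/3} t} dξ)^{1/2} ≥ C t^{-3(2s+n)/(4σ)}, where ε₀ > 0 is fixed. -/
open MeasureTheory
open Metric Set

lemma integrableOn_norm_rpow_closedBall (n : ℕ) (hn : 1 ≤ n) (p ε : ℝ)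
    (hp : 0 < p + n) (hε : 0 < ε) :
    IntegrableOn (fun x : EuclideanSpace ℝ (Fin n) => ‖x‖ ^ p)
      (Metric.closedBall 0 ε) volume := by
  set E := EuclideanSpace ℝ (Fin n)
  set μ : Measure E := volume
  set f : E → ℝ := fun x => ‖x‖ ^ p with hf
  have hmeas : Measurable f := by simp only [hf]; fun_prop
  set ρ : ℝ := (2 : ℝ)⁻¹ with hρ
  have hρ0 : (0:ℝ) < ρ := by norm_num [hρ]
  have hρ1 : ρ < 1 := by norm_num [hρ]
  set A : ℕ → Set E := fun k => closedBall 0 (ε * ρ ^ k) \ ball 0 (ε * ρ ^ (k + 1)) with hA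
  have hAm : ∀ k, MeasurableSet (A k) := fun k =>
    measurableSet_closedBall.diff measurableSet_ball
  have hAsub : ∀ k, A k ⊆ closedBall 0 (ε * ρ ^ k) := fun k => diff_subset
  have hrad_pos : ∀ k : ℕ, (0:ℝ) < ε * ρ ^ k := fun k => mul_pos hε (pow_pos hρ0 k)
  have hfinA : ∀ k, μ (A k) ≠ ⊤ := fun k =>
    ((measure_mono (hAsub k)).trans_lt measure_closedBall_lt_top).ne
  set m : ℝ := max 1 ((2:ℝ) ^ (-p)) with hm
  have hm1 : (1:ℝ) ≤ m := le_max_left _ _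
  -- pointwise bound on A k
  have hbound : ∀ k, ∀ x ∈ A k, ‖f x‖ ≤ m * (ε * ρ ^ k) ^ p := by
    intro k x hx
    obtain ⟨hx1, hx2⟩ := hx
    rw [mem_closedBall, dist_zero_right] at hx1
    rw [mem_ball, dist_zero_right, not_lt] at hx2
    have hfx : ‖f x‖ = ‖x‖ ^ p := by
      simp [hf, Real.norm_eq_abs, abs_of_nonneg (Real.rpow_nonneg (norm_nonneg x) p)]
    rw [hfx]
    rcases le_or_gt 0 p with hp0 | hp0
    · calc ‖x‖ ^ p ≤ (ε * ρ ^ k) ^ p :=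
            Real.rpow_le_rpow (norm_nonneg x) hx1 hp0
        _ ≤ m * (ε * ρ ^ k) ^ p := by
            nlinarith [Real.rpow_nonneg (hrad_pos k).le p]
    · have h1 : ‖x‖ ^ p ≤ (ε * ρ ^ (k+1)) ^ p :=
        Real.rpow_le_rpow_of_nonpos (hrad_pos (k+1)) hx2 hp0.le
      have h2 : (ε * ρ ^ (k+1)) ^ p = (ε * ρ ^ k) ^ p * (2:ℝ) ^ (-p) := by
        have he : ε * ρ ^ (k+1) = (ε * ρ ^ k) * ρ := by ring
        rw [he, Real.mul_rpow (hrad_pos k).le hρ0.le, hρ,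
          Real.inv_rpow (by norm_num : (0:ℝ) ≤ 2), ← Real.rpow_neg (by norm_num : (0:ℝ) ≤ 2)]
      have h3 : (2:ℝ) ^ (-p) ≤ m := le_max_right _ _
      calc ‖x‖ ^ p ≤ (ε * ρ ^ k) ^ p * (2:ℝ) ^ (-p) := h2 ▸ h1
        _ ≤ (ε * ρ ^ k) ^ p * m :=
            mul_le_mul_of_nonneg_left h3 (Real.rpow_nonneg (hrad_pos k).le p)
        _ = m * (ε * ρ ^ k) ^ p := mul_comm _ _
  have hint : ∀ k, IntegrableOn f (A k) μ := fun k =>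
    Measure.integrableOn_of_bounded (hfinA k) hmeas.aestronglyMeasurable
      ((ae_restrict_iff' (hAm k)).2 (Filter.Eventually.of_forall (hbound k)))
  -- measure of annuli and unit ball volume
  set V : ℝ := (μ (closedBall (0:E) 1)).toReal with hV
  have hV0 : 0 ≤ V := ENNReal.toReal_nonneg
  have hvol : ∀ k, (μ (A k)).toReal ≤ (ε * ρ ^ k) ^ (n:ℕ) * V := by
    intro k
    have h2 : μ (closedBall (0:E) (ε * ρ ^ k))
        = ENNReal.ofReal ((ε * ρ ^ k) ^ Module.finrank ℝ E) * μ (closedBall 0 1) :=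
      Measure.addHaar_closedBall' μ 0 (hrad_pos k).le
    have h3 : Module.finrank ℝ E = n := finrank_euclideanSpace_fin
    have hfin : μ (closedBall (0:E) (ε * ρ ^ k)) ≠ ⊤ := measure_closedBall_lt_top.ne
    calc (μ (A k)).toReal ≤ (μ (closedBall (0:E) (ε * ρ ^ k))).toReal :=
          ENNReal.toReal_mono hfin (measure_mono (hAsub k))
      _ = (ε * ρ ^ k) ^ (n:ℕ) * V := by
          rw [h2, h3, ENNReal.toReal_mul, ENNReal.toReal_ofReal (by positivity)]
  -- key algebraic identity
  have key : ∀ k : ℕ, (ε * ρ ^ k) ^ (n:ℕ) * (ε * ρ ^ k) ^ p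
      = ε ^ (p + (n:ℝ)) * (ρ ^ (p + (n:ℝ))) ^ k := by
    intro k
    rw [← Real.rpow_natCast (ε * ρ ^ k) n, ← Real.rpow_add (hrad_pos k),
      Real.mul_rpow hε.le (pow_pos hρ0 k).le,
      ← Real.rpow_natCast ρ k, ← Real.rpow_mul hρ0.le,
      ← Real.rpow_natCast (ρ ^ (p + (n:ℝ))) k, ← Real.rpow_mul hρ0.le,
      add_comm (n:ℝ) p, mul_comm (k:ℝ) (p + (n:ℝ))]
  -- summability of ∫ over annuli
  have hsum : Summable fun k : ℕ => ∫ x in A k, ‖f x‖ ∂μ := by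
    apply Summable.of_nonneg_of_le
      (fun k => setIntegral_nonneg (hAm k) fun x _ => norm_nonneg _)
      (fun k => ?_)
      ((summable_geometric_of_lt_one (Real.rpow_nonneg hρ0.le _)
        (Real.rpow_lt_one hρ0.le hρ1 hp)).mul_left (m * (ε ^ (p + (n:ℝ)) * V)))
    calc ∫ x in A k, ‖f x‖ ∂μ
        ≤ ∫ _ in A k, m * (ε * ρ ^ k) ^ p ∂μ :=
          setIntegral_mono_on (hint k).norm
            (integrableOn_const (hfinA k)) (hAm k) (hbound k)
      _ = (μ (A k)).toReal * (m * (ε * ρ ^ k) ^ p) := by rw [setIntegral_const]; simp [measureReal_def]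
      _ ≤ ((ε * ρ ^ k) ^ (n:ℕ) * V) * (m * (ε * ρ ^ k) ^ p) :=
          mul_le_mul_of_nonneg_right (hvol k) (by positivity)
      _ = m * V * ((ε * ρ ^ k) ^ (n:ℕ) * (ε * ρ ^ k) ^ p) := by ring
      _ = (m * (ε ^ (p + (n:ℝ)) * V)) * (ρ ^ (p + (n:ℝ))) ^ k := by rw [key k]; ring
  have hUnion : IntegrableOn f (⋃ k, A k) μ :=
    integrableOn_iUnion_of_summable_integral_norm hint hsum
  -- the union covers the punctured ball
  have hcover : closedBall (0:E) ε \ {0} ⊆ ⋃ k, A k := by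
    rintro x ⟨hx1, hx2⟩
    rw [mem_closedBall, dist_zero_right] at hx1
    have hxpos : 0 < ‖x‖ := norm_pos_iff.2 (by simpa using hx2)
    have hex : ∃ j : ℕ, ε * ρ ^ (j + 1) < ‖x‖ := by
      obtain ⟨j, hj⟩ := exists_pow_lt_of_lt_one (div_pos hxpos hε) hρ1
      refine ⟨j, ?_⟩
      have : ε * ρ ^ j < ‖x‖ := by
        rw [mul_comm, ← lt_div_iff₀ hε]; exact hj
      have hmono : ρ ^ (j+1) ≤ ρ ^ j := pow_le_pow_of_le_one hρ0.le hρ1.le (by omega)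
      nlinarith
    classical
    set K := Nat.find hex with hK
    have hK1 : ε * ρ ^ (K + 1) < ‖x‖ := Nat.find_spec hex
    have hK2 : ‖x‖ ≤ ε * ρ ^ K := by
      rcases Nat.eq_zero_or_pos K with h0 | h0
      · rw [h0]; simpa using hx1
      · have := Nat.find_min hex (m := K - 1) (by omega)
        push_neg at this
        have : ‖x‖ ≤ ε * ρ ^ (K - 1 + 1) := this
        simpa [Nat.sub_add_cancel h0] using this
    exact mem_iUnion.2 ⟨K, by
      simp only [hA, mem_diff, mem_closedBall, mem_ball, dist_zero_right, not_lt]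
      exact ⟨hK2, hK1.le⟩⟩
  -- remove the point 0 (null set)
  have hnt : Nontrivial E :=
    Module.nontrivial_of_finrank_pos (R := ℝ) (by rw [finrank_euclideanSpace_fin]; omega)
  have h0 : μ ({(0:E)} : Set E) = 0 := by
    have := Measure.addHaar_sphere μ (0:E) 0
    simpa using this
  have : IntegrableOn f (closedBall (0:E) ε \ {0}) μ := hUnion.mono_set hcover
  exact this.congr_set_ae (by
    exact (diff_ae_eq_self.2 (measure_mono_null inter_subset_right h0)).symm) |>.congr_set_ae
      (Filter.EventuallyEq.refl _ _)


/-- Sharpness (lower bound): ‖χ_int(ξ)|ξ|^s e^{-c|ξ|^{2σ/3}t}‖_{L²} ≳ t^{-3(2s+n)/(4σ)}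
for large t, when 2s + n > 0. -/
theorem low_freq_lower_bound (n : ℕ) (hn : 1 ≤ n) (σ s c ε₀ : ℝ)
    (hσ : 0 < σ) (hns : 0 < 2 * s + n) (hc : 0 < c) (hε0 : 0 < ε₀) (hε1 : ε₀ < 1) :
    ∃ C > 0, ∃ T₀ ≥ (1 : ℝ), ∀ t : ℝ, T₀ ≤ t →
      C * t ^ (-(3 * (2 * s + n)) / (4 * σ))
        ≤ Real.sqrt (∫ ξ in Metric.closedBall (0 : EuclideanSpace ℝ (Fin n)) ε₀,
            ‖ξ‖ ^ (2 * s) * Real.exp (-2 * c * ‖ξ‖ ^ (2 * σ / 3) * t)) := by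
  classical
  have hnt : Nontrivial (EuclideanSpace ℝ (Fin n)) := Module.nontrivial_of_finrank_pos (R := ℝ)
    (by rw [finrank_euclideanSpace_fin]; omega)
  set E := EuclideanSpace ℝ (Fin n) with hE
  set μ : Measure E := volume with hμ
  set V : ℝ := (μ (closedBall (0:E) 1)).toReal with hV
  have hVpos : 0 < V :=
    ENNReal.toReal_pos (measure_closedBall_pos μ _ one_pos).ne' measure_closedBall_lt_top.ne
  set m' : ℝ := min 1 ((2:ℝ) ^ (-(2*s))) with hm'
  have hm'pos : 0 < m' := lt_min one_pos (Real.rpow_pos_of_pos two_pos _)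
  set K : ℝ := m' * Real.exp (-(2*c)) with hK
  have hKpos : 0 < K := mul_pos hm'pos (Real.exp_pos _)
  have h2n : (2:ℝ) ≤ 2 ^ n := by
    calc (2:ℝ) = 2 ^ 1 := (pow_one 2).symm
      _ ≤ 2 ^ n := pow_le_pow_right₀ (by norm_num) hn
  set w : ℝ := 1 - ((2:ℝ)^n)⁻¹ with hw
  have hwinv : ((2:ℝ)^n)⁻¹ ≤ 2⁻¹ := by
    apply inv_anti₀ (by norm_num) h2n
  have hwpos : 0 < w := by rw [hw]; linarith
  refine ⟨Real.sqrt (K * (V * w)), Real.sqrt_pos.2 (by positivity),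
    max 1 (ε₀ ^ (-(2*σ)/3)), le_max_left _ _, fun t ht => ?_⟩
  have ht1 : (1:ℝ) ≤ t := le_trans (le_max_left _ _) ht
  have ht0 : (0:ℝ) < t := lt_of_lt_of_le one_pos ht1
  set r : ℝ := t ^ (-3/(2*σ)) with hr
  have hr0 : 0 < r := Real.rpow_pos_of_pos ht0 _
  -- r ≤ ε₀
  have hrε : r ≤ ε₀ := by
    have h1 : ε₀ ^ (-(2*σ)/3) ≤ t := le_trans (le_max_right _ _) ht
    have hexp : -3/(2*σ) ≤ 0 := by
      apply div_nonpos_of_nonpos_of_nonneg <;> [norm_num; positivity]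
    have h2 : t ^ (-3/(2*σ)) ≤ (ε₀ ^ (-(2*σ)/3)) ^ (-3/(2*σ)) :=
      Real.rpow_le_rpow_of_nonpos (Real.rpow_pos_of_pos hε0 _) h1 hexp
    have h3 : (ε₀ ^ (-(2*σ)/3)) ^ (-3/(2*σ)) = ε₀ := by
      rw [← Real.rpow_mul hε0.le]
      have : (-(2*σ)/3) * (-3/(2*σ)) = 1 := by
        field_simp
      rw [this, Real.rpow_one]
    rw [hr]; rw [h3] at h2; exact h2
  -- the annulus
  set A : Set E := closedBall 0 r \ closedBall 0 (r/2) with hA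
  have hAm : MeasurableSet A := measurableSet_closedBall.diff measurableSet_closedBall
  have hAsub : A ⊆ closedBall (0:E) ε₀ :=
    diff_subset.trans (closedBall_subset_closedBall hrε)
  have hAfin : μ A ≠ ⊤ :=
    ((measure_mono hAsub).trans_lt measure_closedBall_lt_top).ne
  set g : E → ℝ := fun ξ => ‖ξ‖ ^ (2*s) * Real.exp (-2 * c * ‖ξ‖ ^ (2*σ/3) * t) with hg
  have hgmeas : Measurable g := by simp only [hg]; fun_prop
  have hgnonneg : ∀ ξ : E, 0 ≤ g ξ := fun ξ =>
    mul_nonneg (Real.rpow_nonneg (norm_nonneg _) _) (Real.exp_pos _).le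
  -- integrability
  have hgint : IntegrableOn g (closedBall (0:E) ε₀) μ := by
    apply Integrable.mono'
      (integrableOn_norm_rpow_closedBall n hn (2*s) ε₀ hns hε0)
      hgmeas.aestronglyMeasurable
    apply Filter.Eventually.of_forall
    intro ξ
    have he : Real.exp (-2 * c * ‖ξ‖ ^ (2*σ/3) * t) ≤ 1 := by
      rw [Real.exp_le_one_iff]
      have h1 : 0 ≤ ‖ξ‖ ^ (2*σ/3) := Real.rpow_nonneg (norm_nonneg _) _
      nlinarith [mul_nonneg (mul_nonneg hc.le h1) ht0.le]
    rw [Real.norm_eq_abs, abs_of_nonneg (hgnonneg ξ)]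
    calc g ξ ≤ ‖ξ‖ ^ (2*s) * 1 :=
          mul_le_mul_of_nonneg_left he (Real.rpow_nonneg (norm_nonneg _) _)
      _ = ‖ξ‖ ^ (2*s) := mul_one _
  -- pointwise lower bound on the annulus
  have hpt : ∀ ξ ∈ A, K * r ^ (2*s) ≤ g ξ := by
    intro ξ hξ
    obtain ⟨hξ1, hξ2⟩ := hξ
    rw [mem_closedBall, dist_zero_right] at hξ1
    rw [mem_closedBall, dist_zero_right, not_le] at hξ2
    have hξpos : 0 < ‖ξ‖ := lt_trans (by positivity) hξ2
    -- norm part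
    have hnorm : r ^ (2*s) * m' ≤ ‖ξ‖ ^ (2*s) := by
      rcases le_or_gt 0 (2*s) with hs0 | hs0
      · have h1 : (r/2) ^ (2*s) ≤ ‖ξ‖ ^ (2*s) :=
          Real.rpow_le_rpow (by positivity) hξ2.le hs0
        have h2 : (r/2) ^ (2*s) = r ^ (2*s) * (2:ℝ) ^ (-(2*s)) := by
          rw [div_eq_mul_inv, Real.mul_rpow hr0.le (by norm_num),
            Real.inv_rpow (by norm_num : (0:ℝ) ≤ 2), ← Real.rpow_neg (by norm_num : (0:ℝ) ≤ 2)]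
        have h3 : m' ≤ (2:ℝ) ^ (-(2*s)) := min_le_right _ _
        have h4 : r ^ (2*s) * m' ≤ r ^ (2*s) * (2:ℝ) ^ (-(2*s)) :=
          mul_le_mul_of_nonneg_left h3 (Real.rpow_nonneg hr0.le _)
        rw [← h2] at h4
        exact h4.trans h1
      · have h1 : r ^ (2*s) ≤ ‖ξ‖ ^ (2*s) :=
          Real.rpow_le_rpow_of_nonpos hξpos hξ1 hs0.le
        have h3 : m' ≤ 1 := min_le_left _ _
        calc r ^ (2*s) * m' ≤ r ^ (2*s) * 1 :=
              mul_le_mul_of_nonneg_left h3 (Real.rpow_nonneg hr0.le _)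
          _ = r ^ (2*s) := mul_one _
          _ ≤ ‖ξ‖ ^ (2*s) := h1
    -- exponential part
    have hexp : Real.exp (-(2*c)) ≤ Real.exp (-2 * c * ‖ξ‖ ^ (2*σ/3) * t) := by
      apply Real.exp_le_exp.2
      have h1 : ‖ξ‖ ^ (2*σ/3) ≤ r ^ (2*σ/3) :=
        Real.rpow_le_rpow (norm_nonneg _) hξ1 (by positivity)
      have h2 : r ^ (2*σ/3) = t⁻¹ := by
        rw [hr, ← Real.rpow_mul ht0.le]
        have he : (-3/(2*σ)) * (2*σ/3) = -1 := by field_simp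
        rw [he, Real.rpow_neg_one]
      have h3 : ‖ξ‖ ^ (2*σ/3) * t ≤ 1 := by
        calc ‖ξ‖ ^ (2*σ/3) * t ≤ t⁻¹ * t := by
              apply mul_le_mul_of_nonneg_right _ ht0.le
              rw [← h2]; exact h1
          _ = 1 := inv_mul_cancel₀ ht0.ne'
      nlinarith
    calc K * r ^ (2*s) = (r ^ (2*s) * m') * Real.exp (-(2*c)) := by rw [hK]; ring
      _ ≤ ‖ξ‖ ^ (2*s) * Real.exp (-2 * c * ‖ξ‖ ^ (2*σ/3) * t) := by
          apply mul_le_mul hnorm hexp (Real.exp_pos _).le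
            (Real.rpow_nonneg (norm_nonneg _) _)
      _ = g ξ := rfl
  -- measure of the annulus
  have hfinrk : Module.finrank ℝ E = n := finrank_euclideanSpace_fin
  have hcbr : (μ (closedBall (0:E) r)).toReal = r ^ (n:ℕ) * V := by
    rw [Measure.addHaar_closedBall' μ 0 hr0.le, hfinrk, ENNReal.toReal_mul,
      ENNReal.toReal_ofReal (by positivity)]
  have hcbr2 : (μ (closedBall (0:E) (r/2))).toReal = (r/2) ^ (n:ℕ) * V := by
    rw [Measure.addHaar_closedBall' μ 0 (by positivity), hfinrk, ENNReal.toReal_mul,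
      ENNReal.toReal_ofReal (by positivity)]
  have hμA : (μ A).toReal = r ^ (n:ℕ) * V * w := by
    have hsub : closedBall (0:E) (r/2) ⊆ closedBall 0 r :=
      closedBall_subset_closedBall (by linarith)
    have hdiff : μ A = μ (closedBall (0:E) r) - μ (closedBall (0:E) (r/2)) :=
      measure_diff hsub measurableSet_closedBall.nullMeasurableSet
        measure_closedBall_lt_top.ne
    rw [hdiff, ENNReal.toReal_sub_of_le (measure_mono hsub) measure_closedBall_lt_top.ne,
      hcbr, hcbr2, hw, div_pow, inv_eq_one_div]
    field_simp
  -- the integral lower bound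
  have hchain : K * (V * w) * r ^ (2*s + (n:ℝ)) ≤ ∫ ξ in closedBall (0:E) ε₀, g ξ ∂μ := by
    have h1 : ∫ _ in A, K * r ^ (2*s) ∂μ ≤ ∫ ξ in A, g ξ ∂μ :=
      setIntegral_mono_on (integrableOn_const hAfin)
        (hgint.mono_set hAsub) hAm hpt
    have h2 : ∫ ξ in A, g ξ ∂μ ≤ ∫ ξ in closedBall (0:E) ε₀, g ξ ∂μ :=
      setIntegral_mono_set hgint
        (Filter.Eventually.of_forall hgnonneg) (HasSubset.Subset.eventuallyLE hAsub)
    have h3 : ∫ _ in A, K * r ^ (2*s) ∂μ = (r ^ (n:ℕ) * V * w) * (K * r ^ (2*s)) := by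
      rw [setIntegral_const, measureReal_def, hμA, smul_eq_mul]
    have h4 : r ^ (n:ℕ) * r ^ (2*s) = r ^ (2*s + (n:ℝ)) := by
      rw [← Real.rpow_natCast r n, ← Real.rpow_add hr0, add_comm]
    calc K * (V * w) * r ^ (2*s + (n:ℝ)) = (r ^ (n:ℕ) * V * w) * (K * r ^ (2*s)) := by
          rw [← h4]; ring
      _ ≤ ∫ ξ in A, g ξ ∂μ := h3 ▸ h1
      _ ≤ _ := h2
  -- take square roots
  have hrt : Real.sqrt (r ^ (2*s + (n:ℝ))) = t ^ (-(3 * (2 * s + ↑n)) / (4 * σ)) := by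
    rw [hr, ← Real.rpow_mul ht0.le, Real.sqrt_eq_rpow, ← Real.rpow_mul ht0.le]
    congr 1
    field_simp
    ring
  calc Real.sqrt (K * (V * w)) * t ^ (-(3 * (2 * s + ↑n)) / (4 * σ))
      = Real.sqrt (K * (V * w)) * Real.sqrt (r ^ (2*s + (n:ℝ))) := by rw [hrt]
    _ = Real.sqrt (K * (V * w) * r ^ (2*s + (n:ℝ))) :=
        (Real.sqrt_mul (by positivity) _).symm
    _ ≤ Real.sqrt (∫ ξ in closedBall (0:E) ε₀, g ξ ∂μ) := Real.sqrt_le_sqrt hchain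
    _ = _ := rfl
end

section
/- Let η ∈ (1,3), C_η = √(3+2η-η²)/2, n > (4/3)σ with σ > 0. Then there exists C > 0 such that for all t ≥ 0, (∫_{|ξ| ≤ ε₀} |ξ|^{-8σ/3} (e^{-|ξ|^{2σ/3} t} - cos(C_η |ξ|^{2σ/3} t) e^{-(η-1)|ξ|^{2σ/3} t/2})² dξ)^{1/2} ≤ C (1+t)^{-(3n-8σ)/(4σ)}. -/
open MeasureTheory Metric ENNReal

section helpers

lemma dw_exp_sub_exp_le {a b : ℝ} (ha : 0 ≤ a) (hab : a ≤ b) :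
    Real.exp (-a) - Real.exp (-b) ≤ b - a := by
  have e : Real.exp (-b) = Real.exp (-a) * Real.exp (a - b) := by
    rw [← Real.exp_add]; ring_nf
  have h1 : Real.exp (-a) ≤ 1 := Real.exp_le_one_iff.mpr (by linarith)
  have h2 : (a - b) + 1 ≤ Real.exp (a - b) := Real.add_one_le_exp _
  have h3 : 0 < Real.exp (-a) := Real.exp_pos _
  nlinarith

lemma dw_abs_exp_sub_exp {a b : ℝ} (ha : 0 ≤ a) (hb : 0 ≤ b) :
    |Real.exp (-a) - Real.exp (-b)| ≤ |a - b| := by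
  rcases le_total a b with h | h
  · rw [abs_sub_comm (a := a), abs_of_nonneg (sub_nonneg.mpr h),
      abs_of_nonneg (sub_nonneg.mpr (Real.exp_le_exp.mpr (neg_le_neg h)))]
    exact dw_exp_sub_exp_le ha h
  · rw [abs_of_nonneg (sub_nonneg.mpr h),
      abs_sub_comm, abs_of_nonneg (sub_nonneg.mpr (Real.exp_le_exp.mpr (neg_le_neg h)))]
    exact dw_exp_sub_exp_le hb h

lemma dw_abs_one_sub_cos (x : ℝ) : |1 - Real.cos x| ≤ |x| := by
  have hc : Real.cos x ≤ 1 := Real.cos_le_one x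
  rw [abs_of_nonneg (by linarith)]
  have h1 : Real.sin (x/2) ^ 2 = 1/2 - Real.cos x / 2 := by
    have := Real.sin_sq_eq_half_sub (x/2)
    rw [show 2 * (x/2) = x from by ring] at this
    exact this
  have h2 : |Real.sin (x/2)| ≤ |x/2| := Real.abs_sin_le_abs
  have h3 : |Real.sin (x/2)| ≤ 1 := by
    rw [abs_le]; exact ⟨Real.neg_one_le_sin _, Real.sin_le_one _⟩
  have h4 : Real.sin (x/2) ^ 2 = |Real.sin (x/2)| ^ 2 := (sq_abs _).symm
  have h5 : |x/2| = |x| / 2 := by rw [abs_div]; norm_num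
  nlinarith [abs_nonneg (Real.sin (x/2))]

lemma dw_rpow_mul_exp_le {b : ℝ} (hb : 0 < b) :
    ∃ K > 0, ∀ u : ℝ, 0 ≤ u → u ^ b * Real.exp (-u) ≤ K := by
  refine ⟨(2*b) ^ b, Real.rpow_pos_of_pos (by linarith) _, fun u hu => ?_⟩
  rcases eq_or_lt_of_le hu with h0 | h0
  · rw [← h0, Real.zero_rpow hb.ne', zero_mul]
    exact (Real.rpow_pos_of_pos (by linarith) _).le
  · have h2b : (0:ℝ) < 2*b := by linarith
    have hlog : Real.log u ≤ Real.log (2*b) + u/(2*b) - 1 := by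
      have := Real.log_le_sub_one_of_pos (x := u/(2*b)) (by positivity)
      rw [Real.log_div h0.ne' h2b.ne'] at this
      linarith
    rw [Real.rpow_def_of_pos h0, ← Real.exp_add, Real.rpow_def_of_pos h2b]
    apply Real.exp_le_exp.mpr
    have hb' : 0 < b := hb
    have : Real.log u * b ≤ (Real.log (2*b) + u/(2*b) - 1) * b :=
      mul_le_mul_of_nonneg_right hlog hb.le
    have hdiv : u/(2*b) * b = u/2 := by field_simp
    nlinarith [this]

lemma dw_lintegral_rpow_inner (n : ℕ) (q : ℝ) (hq0 : q < 0) (hqn : -(n:ℝ) < q) :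
    ∃ K : ℝ≥0∞, K ≠ ⊤ ∧ ∀ ρ : ℝ, 0 < ρ →
      (∫⁻ ξ in closedBall (0 : EuclideanSpace ℝ (Fin n)) ρ, ENNReal.ofReal (‖ξ‖ ^ q))
        ≤ K * ENNReal.ofReal (ρ ^ ((n:ℝ) + q)) := by
  set E := EuclideanSpace ℝ (Fin n)
  set V : ℝ≥0∞ := volume (closedBall (0 : E) 1) with hV
  have hVtop : V ≠ ⊤ := measure_closedBall_lt_top.ne
  set u : ℝ := 2⁻¹ with hu
  have hu0 : (0:ℝ) < u := by norm_num [hu]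
  have hu1 : u < 1 := by norm_num [hu]
  have hnq : (0:ℝ) < (n:ℝ) + q := by linarith
  set w : ℝ := u ^ ((n:ℝ) + q) with hw
  have hw0 : 0 ≤ w := Real.rpow_nonneg hu0.le _
  have hw1 : w < 1 := Real.rpow_lt_one hu0.le hu1 hnq
  refine ⟨ENNReal.ofReal (u ^ q) * (1 - ENNReal.ofReal w)⁻¹ * V, ?_, ?_⟩
  · refine ENNReal.mul_ne_top (ENNReal.mul_ne_top ofReal_ne_top ?_) hVtop
    rw [ENNReal.inv_ne_top]
    exact (tsub_pos_of_lt (ENNReal.ofReal_lt_one.mpr hw1)).ne'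
  · intro ρ hρ
    -- the dyadic annuli
    set A : ℕ → Set E := fun k => closedBall (0:E) (ρ * u ^ k) \ closedBall (0:E) (ρ * u ^ (k+1))
      with hA
    have hcover : closedBall (0:E) ρ ⊆ {0} ∪ ⋃ k, A k := by
      intro ξ hξ
      rcases eq_or_ne ξ 0 with h0 | h0
      · exact Set.mem_union_left _ h0
      · have hξ0 : 0 < ‖ξ‖ := norm_pos_iff.mpr h0
        have hξρ : ‖ξ‖ ≤ ρ := mem_closedBall_zero_iff.mp hξ
        have hex : ∃ k, ρ * u ^ (k+1) < ‖ξ‖ := by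
          obtain ⟨k, hk⟩ := exists_pow_lt_of_lt_one (div_pos hξ0 hρ) hu1
          refine ⟨k, ?_⟩
          have h1 : ρ * u ^ k < ‖ξ‖ := by
            have h2 : u ^ k * ρ < ‖ξ‖ := (lt_div_iff₀ hρ).mp hk
            linarith [h2]
          calc ρ * u ^ (k+1) ≤ ρ * u ^ k := by
                apply mul_le_mul_of_nonneg_left _ hρ.le
                exact pow_le_pow_of_le_one hu0.le hu1.le (Nat.le_succ k)
            _ < ‖ξ‖ := h1
        classical
        set k₀ := Nat.find hex with hk₀
        have hlow : ρ * u ^ (k₀+1) < ‖ξ‖ := Nat.find_spec hex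
        have hhigh : ‖ξ‖ ≤ ρ * u ^ k₀ := by
          rcases Nat.eq_zero_or_pos k₀ with h | h
          · rw [h]; simpa using hξρ
          · have := Nat.find_min hex (m := k₀ - 1) (by omega)
            push_neg at this
            have : ‖ξ‖ ≤ ρ * u ^ (k₀ - 1 + 1) := this
            rwa [Nat.sub_add_cancel h] at this
        refine Set.mem_union_right _ (Set.mem_iUnion.mpr ⟨k₀, ?_, ?_⟩)
        · exact mem_closedBall_zero_iff.mpr hhigh
        · simp only [mem_closedBall_zero_iff]
          exact not_le.mpr hlow
    have hsplit : (∫⁻ ξ in closedBall (0:E) ρ, ENNReal.ofReal (‖ξ‖ ^ q)) ≤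
        (∫⁻ ξ in ({0} : Set E), ENNReal.ofReal (‖ξ‖ ^ q)) +
          ∑' k, ∫⁻ ξ in A k, ENNReal.ofReal (‖ξ‖ ^ q) := by
      calc (∫⁻ ξ in closedBall (0:E) ρ, ENNReal.ofReal (‖ξ‖ ^ q))
          ≤ ∫⁻ ξ in ({0} : Set E) ∪ ⋃ k, A k, ENNReal.ofReal (‖ξ‖ ^ q) :=
            lintegral_mono_set hcover
        _ ≤ (∫⁻ ξ in ({0} : Set E), ENNReal.ofReal (‖ξ‖ ^ q)) +
              ∫⁻ ξ in ⋃ k, A k, ENNReal.ofReal (‖ξ‖ ^ q) := lintegral_union_le _ _ _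
        _ ≤ _ := by gcongr; exact lintegral_iUnion_le _ _
    have hzero : (∫⁻ ξ in ({0} : Set E), ENNReal.ofReal (‖ξ‖ ^ q)) = 0 := by
      have : ∀ ξ ∈ ({0} : Set E), ENNReal.ofReal (‖ξ‖ ^ q) ≤ 0 := by
        intro ξ hξ
        simp only [Set.mem_singleton_iff] at hξ
        simp [hξ, Real.zero_rpow hq0.ne]
      have := setLIntegral_mono' (μ := volume) (measurableSet_singleton (0:E)) this
      simpa using this
    have hterm : ∀ k : ℕ, (∫⁻ ξ in A k, ENNReal.ofReal (‖ξ‖ ^ q)) ≤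
        ENNReal.ofReal (ρ ^ ((n:ℝ) + q) * u ^ q) * ENNReal.ofReal w ^ k * V := by
      intro k
      have hAk : MeasurableSet (A k) :=
        (measurableSet_closedBall).diff measurableSet_closedBall
      have hr1 : (0:ℝ) < ρ * u ^ (k+1) := by positivity
      have hbound : ∀ ξ ∈ A k, ENNReal.ofReal (‖ξ‖ ^ q) ≤
          ENNReal.ofReal ((ρ * u ^ (k+1)) ^ q) := by
        intro ξ hξ
        obtain ⟨-, hξ2⟩ := hξ
        simp only [mem_closedBall_zero_iff, not_le] at hξ2
        exact ENNReal.ofReal_le_ofReal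
          (Real.rpow_le_rpow_of_nonpos hr1 hξ2.le hq0.le)
      calc (∫⁻ ξ in A k, ENNReal.ofReal (‖ξ‖ ^ q))
          ≤ ∫⁻ _ in A k, ENNReal.ofReal ((ρ * u ^ (k+1)) ^ q) :=
            setLIntegral_mono' hAk hbound
        _ = ENNReal.ofReal ((ρ * u ^ (k+1)) ^ q) * volume (A k) := setLIntegral_const _ _
        _ ≤ ENNReal.ofReal ((ρ * u ^ (k+1)) ^ q) *
              (ENNReal.ofReal ((ρ * u ^ k) ^ (n:ℕ)) * V) := by
            gcongr
            rw [hV]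
            have := Measure.addHaar_closedBall' (volume : Measure E) (0:E)
              (r := ρ * u ^ k) (by positivity)
            rw [finrank_euclideanSpace_fin] at this
            calc volume (A k) ≤ volume (closedBall (0:E) (ρ * u ^ k)) :=
                  measure_mono Set.diff_subset
              _ = _ := this
        _ = ENNReal.ofReal (ρ ^ ((n:ℝ) + q) * u ^ q) * ENNReal.ofReal w ^ k * V := by
            have halg : (ρ * u ^ (k+1)) ^ q * (ρ * u ^ k) ^ (n:ℕ)
                = ρ ^ ((n:ℝ) + q) * u ^ q * w ^ k := by
              have e1 : (ρ * u ^ (k+1)) ^ q = ρ ^ q * u ^ ((((k:ℝ))+1) * q) := by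
                rw [Real.mul_rpow hρ.le (by positivity), ← Real.rpow_natCast u (k+1),
                  ← Real.rpow_mul hu0.le]
                norm_cast
              have e2 : (ρ * u ^ k) ^ (n:ℕ) = ρ ^ (n:ℝ) * u ^ ((k:ℝ) * n) := by
                rw [← Real.rpow_natCast (ρ * u ^ k) n,
                  Real.mul_rpow hρ.le (by positivity),
                  ← Real.rpow_natCast u k, ← Real.rpow_mul hu0.le]
              have e3 : w ^ k = u ^ (((n:ℝ) + q) * k) := by
                rw [hw, ← Real.rpow_natCast (u ^ ((n:ℝ)+q)) k, ← Real.rpow_mul hu0.le]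
              rw [e1, e2, e3, Real.rpow_add hρ]
              rw [show ρ ^ q * u ^ (((k:ℝ)+1) * q) * (ρ ^ (n:ℝ) * u ^ ((k:ℝ) * (n:ℝ)))
                  = (ρ ^ (n:ℝ) * ρ ^ q) * (u ^ (((k:ℝ)+1)*q) * u ^ ((k:ℝ)*(n:ℝ))) from by ring,
                ← Real.rpow_add hu0]
              rw [show ρ ^ (n:ℝ) * ρ ^ q * u ^ q * u ^ (((n:ℝ) + q) * (k:ℝ))
                  = (ρ ^ (n:ℝ) * ρ ^ q) * (u ^ q * u ^ (((n:ℝ)+q)*(k:ℝ))) from by ring,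
                ← Real.rpow_add hu0]
              congr 1
              ring
            rw [← mul_assoc, ← ENNReal.ofReal_mul (by positivity), halg,
              ENNReal.ofReal_mul (by positivity), ENNReal.ofReal_pow hw0]
    calc (∫⁻ ξ in closedBall (0:E) ρ, ENNReal.ofReal (‖ξ‖ ^ q)) ≤
        (∫⁻ ξ in ({0} : Set E), ENNReal.ofReal (‖ξ‖ ^ q)) +
          ∑' k, ∫⁻ ξ in A k, ENNReal.ofReal (‖ξ‖ ^ q) := hsplit
      _ ≤ 0 + ∑' k, ENNReal.ofReal (ρ ^ ((n:ℝ) + q) * u ^ q) * ENNReal.ofReal w ^ k * V := by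
          rw [hzero]; gcongr with k; exact hterm k
      _ = ENNReal.ofReal (ρ ^ ((n:ℝ) + q) * u ^ q) * (1 - ENNReal.ofReal w)⁻¹ * V := by
          rw [zero_add]
          rw [ENNReal.tsum_mul_right, ENNReal.tsum_mul_left, ENNReal.tsum_geometric]
      _ = ENNReal.ofReal (u ^ q) * (1 - ENNReal.ofReal w)⁻¹ * V *
            ENNReal.ofReal (ρ ^ ((n:ℝ) + q)) := by
          rw [ENNReal.ofReal_mul (by positivity)]
          ring

lemma dw_lintegral_rpow_outer (n : ℕ) (q : ℝ) (hqn : q < -(n:ℝ)) :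
    ∃ K : ℝ≥0∞, K ≠ ⊤ ∧ ∀ ρ : ℝ, 0 < ρ →
      (∫⁻ ξ in (closedBall (0 : EuclideanSpace ℝ (Fin n)) ρ)ᶜ, ENNReal.ofReal (‖ξ‖ ^ q))
        ≤ K * ENNReal.ofReal (ρ ^ ((n:ℝ) + q)) := by
  set E := EuclideanSpace ℝ (Fin n)
  set V : ℝ≥0∞ := volume (closedBall (0 : E) 1) with hV
  have hVtop : V ≠ ⊤ := measure_closedBall_lt_top.ne
  have hnq : (n:ℝ) + q < 0 := by linarith
  have hq0 : q < 0 := by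
    have : (0:ℝ) ≤ n := Nat.cast_nonneg n
    linarith
  set w : ℝ := (2:ℝ) ^ ((n:ℝ) + q) with hw
  have hw0 : 0 ≤ w := Real.rpow_nonneg (by norm_num) _
  have hw1 : w < 1 := Real.rpow_lt_one_of_one_lt_of_neg one_lt_two hnq
  refine ⟨ENNReal.ofReal ((2:ℝ) ^ (n:ℝ)) * (1 - ENNReal.ofReal w)⁻¹ * V, ?_, ?_⟩
  · refine ENNReal.mul_ne_top (ENNReal.mul_ne_top ofReal_ne_top ?_) hVtop
    rw [ENNReal.inv_ne_top]
    exact (tsub_pos_of_lt (ENNReal.ofReal_lt_one.mpr hw1)).ne'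
  · intro ρ hρ
    set A : ℕ → Set E := fun k =>
      closedBall (0:E) (ρ * 2 ^ (k+1)) \ closedBall (0:E) (ρ * 2 ^ k) with hA
    have hcover : (closedBall (0:E) ρ)ᶜ ⊆ ⋃ k, A k := by
      intro ξ hξ
      simp only [Set.mem_compl_iff, mem_closedBall_zero_iff, not_le] at hξ
      have hex : ∃ k : ℕ, ‖ξ‖ ≤ ρ * 2 ^ (k+1) := by
        obtain ⟨k, hk⟩ := pow_unbounded_of_one_lt (‖ξ‖ / ρ) (one_lt_two (α := ℝ))
        refine ⟨k, ?_⟩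
        have : ‖ξ‖ / ρ < 2 ^ (k+1) := lt_of_lt_of_le hk (by
          apply pow_le_pow_right₀ one_le_two (Nat.le_succ k))
        have := (div_lt_iff₀ hρ).mp this
        linarith
      classical
      set k₀ := Nat.find hex with hk₀
      have hhigh : ‖ξ‖ ≤ ρ * 2 ^ (k₀+1) := Nat.find_spec hex
      have hlow : ρ * 2 ^ k₀ < ‖ξ‖ := by
        rcases Nat.eq_zero_or_pos k₀ with h | h
        · rw [h]; simpa using hξ
        · have hm := Nat.find_min hex (m := k₀ - 1) (by omega)
          push_neg at hm
          have : ρ * 2 ^ (k₀ - 1 + 1) < ‖ξ‖ := hm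
          rwa [Nat.sub_add_cancel h] at this
      refine Set.mem_iUnion.mpr ⟨k₀, mem_closedBall_zero_iff.mpr hhigh, ?_⟩
      simp only [mem_closedBall_zero_iff]
      exact not_le.mpr hlow
    have hterm : ∀ k : ℕ, (∫⁻ ξ in A k, ENNReal.ofReal (‖ξ‖ ^ q)) ≤
        ENNReal.ofReal (ρ ^ ((n:ℝ) + q) * (2:ℝ) ^ (n:ℝ)) * ENNReal.ofReal w ^ k * V := by
      intro k
      have hAk : MeasurableSet (A k) :=
        measurableSet_closedBall.diff measurableSet_closedBall
      have hr1 : (0:ℝ) < ρ * 2 ^ k := by positivity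
      have hbound : ∀ ξ ∈ A k, ENNReal.ofReal (‖ξ‖ ^ q) ≤
          ENNReal.ofReal ((ρ * 2 ^ k) ^ q) := by
        intro ξ hξ
        obtain ⟨-, hξ2⟩ := hξ
        simp only [mem_closedBall_zero_iff, not_le] at hξ2
        exact ENNReal.ofReal_le_ofReal
          (Real.rpow_le_rpow_of_nonpos hr1 hξ2.le hq0.le)
      calc (∫⁻ ξ in A k, ENNReal.ofReal (‖ξ‖ ^ q))
          ≤ ∫⁻ _ in A k, ENNReal.ofReal ((ρ * 2 ^ k) ^ q) :=
            setLIntegral_mono' hAk hbound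
        _ = ENNReal.ofReal ((ρ * 2 ^ k) ^ q) * volume (A k) := setLIntegral_const _ _
        _ ≤ ENNReal.ofReal ((ρ * 2 ^ k) ^ q) *
              (ENNReal.ofReal ((ρ * 2 ^ (k+1)) ^ (n:ℕ)) * V) := by
            gcongr
            rw [hV]
            have := Measure.addHaar_closedBall' (volume : Measure E) (0:E)
              (r := ρ * 2 ^ (k+1)) (by positivity)
            rw [finrank_euclideanSpace_fin] at this
            calc volume (A k) ≤ volume (closedBall (0:E) (ρ * 2 ^ (k+1))) :=
                  measure_mono Set.diff_subset
              _ = _ := this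
        _ = ENNReal.ofReal (ρ ^ ((n:ℝ) + q) * (2:ℝ) ^ (n:ℝ)) * ENNReal.ofReal w ^ k * V := by
            have h20 : (0:ℝ) < 2 := by norm_num
            have halg : (ρ * 2 ^ k) ^ q * (ρ * 2 ^ (k+1)) ^ (n:ℕ)
                = ρ ^ ((n:ℝ) + q) * (2:ℝ) ^ (n:ℝ) * w ^ k := by
              have e1 : (ρ * (2:ℝ) ^ k) ^ q = ρ ^ q * (2:ℝ) ^ ((k:ℝ) * q) := by
                rw [Real.mul_rpow hρ.le (by positivity), ← Real.rpow_natCast (2:ℝ) k,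
                  ← Real.rpow_mul h20.le]
              have e2 : (ρ * (2:ℝ) ^ (k+1)) ^ (n:ℕ) = ρ ^ (n:ℝ) * (2:ℝ) ^ (((k:ℝ)+1) * n) := by
                rw [← Real.rpow_natCast (ρ * 2 ^ (k+1)) n,
                  Real.mul_rpow hρ.le (by positivity),
                  ← Real.rpow_natCast (2:ℝ) (k+1), ← Real.rpow_mul h20.le]
                norm_cast
              have e3 : w ^ k = (2:ℝ) ^ (((n:ℝ) + q) * k) := by
                rw [hw, ← Real.rpow_natCast ((2:ℝ) ^ ((n:ℝ)+q)) k, ← Real.rpow_mul h20.le]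
              rw [e1, e2, e3, Real.rpow_add hρ]
              rw [show ρ ^ q * (2:ℝ) ^ ((k:ℝ) * q) * (ρ ^ (n:ℝ) * (2:ℝ) ^ (((k:ℝ)+1) * (n:ℝ)))
                  = (ρ ^ (n:ℝ) * ρ ^ q) * ((2:ℝ) ^ ((k:ℝ)*q) * (2:ℝ) ^ (((k:ℝ)+1)*(n:ℝ)))
                  from by ring, ← Real.rpow_add h20]
              rw [show ρ ^ (n:ℝ) * ρ ^ q * (2:ℝ) ^ (n:ℝ) * (2:ℝ) ^ (((n:ℝ) + q) * (k:ℝ))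
                  = (ρ ^ (n:ℝ) * ρ ^ q) * ((2:ℝ) ^ (n:ℝ) * (2:ℝ) ^ (((n:ℝ)+q)*(k:ℝ)))
                  from by ring, ← Real.rpow_add h20]
              congr 1
              ring
            rw [← mul_assoc, ← ENNReal.ofReal_mul (by positivity), halg,
              ENNReal.ofReal_mul (by positivity), ENNReal.ofReal_pow hw0]
    calc (∫⁻ ξ in (closedBall (0:E) ρ)ᶜ, ENNReal.ofReal (‖ξ‖ ^ q))
        ≤ ∫⁻ ξ in ⋃ k, A k, ENNReal.ofReal (‖ξ‖ ^ q) := lintegral_mono_set hcover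
      _ ≤ ∑' k, ∫⁻ ξ in A k, ENNReal.ofReal (‖ξ‖ ^ q) := lintegral_iUnion_le _ _
      _ ≤ ∑' k, ENNReal.ofReal (ρ ^ ((n:ℝ) + q) * (2:ℝ) ^ (n:ℝ)) * ENNReal.ofReal w ^ k * V := by
          gcongr with k; exact hterm k
      _ = ENNReal.ofReal (ρ ^ ((n:ℝ) + q) * (2:ℝ) ^ (n:ℝ)) * (1 - ENNReal.ofReal w)⁻¹ * V := by
          rw [ENNReal.tsum_mul_right, ENNReal.tsum_mul_left, ENNReal.tsum_geometric]
      _ = ENNReal.ofReal ((2:ℝ) ^ (n:ℝ)) * (1 - ENNReal.ofReal w)⁻¹ * V *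
            ENNReal.ofReal (ρ ^ ((n:ℝ) + q)) := by
          rw [ENNReal.ofReal_mul (by positivity)]
          ring

end helpers

set_option maxHeartbeats 1600000 in
/-- Upper bound for the diffusion-waves multiplier (Lemma 2.2, estimate (A1)):
for η ∈ (1,3), C_η = √(3+2η-η²)/2 and n > (4/3)σ, the L² norm over {|ξ| ≤ ε₀} of
|ξ|^{-4σ/3}(e^{-|ξ|^{2σ/3}t} - cos(C_η|ξ|^{2σ/3}t)e^{-(η-1)|ξ|^{2σ/3}t/2})
is ≲ (1+t)^{-(3n-8σ)/(4σ)}. -/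
theorem diffusion_waves_multiplier_bound (n : ℕ) (η σ ε₀ : ℝ)
    (hη1 : 1 < η) (hη3 : η < 3) (hσ : 0 < σ) (hn : (n : ℝ) > 4 / 3 * σ)
    (hε0 : 0 < ε₀) (hε1 : ε₀ < 1) :
    ∃ C > 0, ∀ t : ℝ, 0 ≤ t →
      Real.sqrt (∫ ξ in Metric.closedBall (0 : EuclideanSpace ℝ (Fin n)) ε₀,
          ‖ξ‖ ^ (-(8 : ℝ) * σ / 3) *
            (Real.exp (-‖ξ‖ ^ (2 * σ / 3) * t)
              - Real.cos (Real.sqrt (3 + 2 * η - η ^ 2) / 2 * ‖ξ‖ ^ (2 * σ / 3) * t)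
                * Real.exp (-(η - 1) * ‖ξ‖ ^ (2 * σ / 3) * t / 2)) ^ 2)
        ≤ C * (1 + t) ^ (-(3 * n - 8 * σ) / (4 * σ)) := by
  classical
  set E := EuclideanSpace ℝ (Fin n) with hE
  set ν : ℝ := (η - 1) / 2 with hν
  have hν0 : 0 < ν := by rw [hν]; linarith
  have hν1 : ν < 1 := by rw [hν]; linarith
  set Cc : ℝ := Real.sqrt (3 + 2 * η - η ^ 2) / 2 with hCc
  have hCc0 : 0 ≤ Cc := by rw [hCc]; positivity
  set L : ℝ := (1 - ν) + Cc with hL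
  have hL0 : 0 < L := by rw [hL]; nlinarith
  set E1 : ℝ := -(3 * (n:ℝ) - 8 * σ) / (4 * σ) with hE1
  set b : ℝ := 1 + |2 * E1| with hb
  have hb0 : 0 < b := by rw [hb]; positivity
  have hbE : -(2 * E1) < b := by
    rw [hb]
    calc -(2 * E1) ≤ |2 * E1| := neg_le_abs _
      _ < 1 + |2 * E1| := by linarith
  set q₁ : ℝ := -(4 * σ) / 3 with hq₁
  have hq₁0 : q₁ < 0 := by rw [hq₁]; linarith
  have hq₁n : -(n:ℝ) < q₁ := by rw [hq₁]; linarith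
  set q₂ : ℝ := -(8 * σ) / 3 - (2 * σ / 3) * b with hq₂
  have hq₂n : q₂ < -(n:ℝ) := by
    have h1 : -(2 * E1) = (3 * (n:ℝ) - 8 * σ) / (2 * σ) := by
      rw [hE1]; field_simp; ring
    rw [h1] at hbE
    rw [div_lt_iff₀ (by linarith : (0:ℝ) < 2 * σ)] at hbE
    rw [hq₂]; nlinarith
  obtain ⟨K₁, hK₁top, hK₁⟩ := dw_lintegral_rpow_inner n q₁ hq₁0 hq₁n
  obtain ⟨K₂, hK₂top, hK₂⟩ := dw_lintegral_rpow_outer n q₂ hq₂n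
  obtain ⟨Kb, hKb0, hKb⟩ := dw_rpow_mul_exp_le hb0
  set C₄ : ℝ := 4 * Kb * (2 * ν) ^ (-b) with hC₄
  have hC₄0 : 0 < C₄ := by
    rw [hC₄]
    have : (0:ℝ) < (2 * ν) ^ (-b) := Real.rpow_pos_of_pos (by linarith) _
    positivity
  -- scalar estimates
  have hscalar_lin : ∀ s : ℝ, 0 ≤ s →
      |Real.exp (-s) - Real.cos (Cc * s) * Real.exp (-(ν * s))| ≤ L * s := by
    intro s hs
    have h1 : |Real.exp (-s) - Real.exp (-(ν * s))| ≤ |s - ν * s| :=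
      dw_abs_exp_sub_exp hs (by positivity)
    have h1' : |s - ν * s| = (1 - ν) * s := by
      rw [show s - ν * s = (1 - ν) * s from by ring, abs_of_nonneg (by nlinarith)]
    have h3 : |Real.cos (Cc * s) * Real.exp (-(ν * s)) - Real.exp (-(ν * s))| ≤ Cc * s := by
      rw [show Real.cos (Cc * s) * Real.exp (-(ν * s)) - Real.exp (-(ν * s))
          = -((1 - Real.cos (Cc * s)) * Real.exp (-(ν * s))) from by ring, abs_neg, abs_mul]
      have hcos := dw_abs_one_sub_cos (Cc * s)
      have he : |Real.exp (-(ν * s))| ≤ 1 := by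
        rw [abs_of_pos (Real.exp_pos _)]
        exact Real.exp_le_one_iff.mpr (by nlinarith)
      calc |1 - Real.cos (Cc * s)| * |Real.exp (-(ν * s))| ≤ |Cc * s| * 1 :=
            mul_le_mul hcos he (abs_nonneg _) (abs_nonneg _)
        _ = Cc * s := by rw [mul_one, abs_of_nonneg (by positivity)]
    calc |Real.exp (-s) - Real.cos (Cc * s) * Real.exp (-(ν * s))|
        = |(Real.exp (-s) - Real.exp (-(ν * s)))
            - (Real.cos (Cc * s) * Real.exp (-(ν * s)) - Real.exp (-(ν * s)))| := by
          congr 1; ring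
      _ ≤ |Real.exp (-s) - Real.exp (-(ν * s))|
            + |Real.cos (Cc * s) * Real.exp (-(ν * s)) - Real.exp (-(ν * s))| := by
          rw [sub_eq_add_neg]
          refine (abs_add_le _ _).trans ?_
          rw [abs_neg]
      _ ≤ (1 - ν) * s + Cc * s := by
          rw [← h1']; exact add_le_add h1 h3
      _ = L * s := by rw [hL]; ring
  have hscalar_exp : ∀ s : ℝ, 0 ≤ s →
      |Real.exp (-s) - Real.cos (Cc * s) * Real.exp (-(ν * s))| ≤ 2 * Real.exp (-(ν * s)) := by
    intro s hs
    have h1 : Real.exp (-s) ≤ Real.exp (-(ν * s)) :=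
      Real.exp_le_exp.mpr (by nlinarith [mul_nonneg (sub_nonneg.mpr hν1.le) hs])
    have h2 : |Real.cos (Cc * s) * Real.exp (-(ν * s))| ≤ Real.exp (-(ν * s)) := by
      rw [abs_mul, abs_of_pos (Real.exp_pos _)]
      have := Real.abs_cos_le_one (Cc * s)
      nlinarith [Real.exp_pos (-(ν * s))]
    calc |Real.exp (-s) - Real.cos (Cc * s) * Real.exp (-(ν * s))|
        ≤ |Real.exp (-s)| + |Real.cos (Cc * s) * Real.exp (-(ν * s))| := by
          rw [sub_eq_add_neg]; refine (abs_add_le _ _).trans ?_; rw [abs_neg]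
      _ ≤ Real.exp (-(ν * s)) + Real.exp (-(ν * s)) := by
          refine add_le_add ?_ h2
          rw [abs_of_pos (Real.exp_pos _)]; exact h1
      _ = 2 * Real.exp (-(ν * s)) := by ring
  -- notation for the integrand
  set F : ℝ → E → ℝ := fun t ξ =>
    ‖ξ‖ ^ (-(8 : ℝ) * σ / 3) *
      (Real.exp (-‖ξ‖ ^ (2 * σ / 3) * t)
        - Real.cos (Real.sqrt (3 + 2 * η - η ^ 2) / 2 * ‖ξ‖ ^ (2 * σ / 3) * t)
          * Real.exp (-(η - 1) * ‖ξ‖ ^ (2 * σ / 3) * t / 2)) ^ 2 with hF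
  have hFval : ∀ t : ℝ, ∀ ξ : E, F t ξ =
      ‖ξ‖ ^ (-(8 : ℝ) * σ / 3) *
        (Real.exp (-(‖ξ‖ ^ (2 * σ / 3) * t))
          - Real.cos (Cc * (‖ξ‖ ^ (2 * σ / 3) * t))
            * Real.exp (-(ν * (‖ξ‖ ^ (2 * σ / 3) * t)))) ^ 2 := by
    intro t ξ
    simp only [hF]
    have e1 : -‖ξ‖ ^ (2 * σ / 3) * t = -(‖ξ‖ ^ (2 * σ / 3) * t) := by ring
    have e2 : Real.sqrt (3 + 2 * η - η ^ 2) / 2 * ‖ξ‖ ^ (2 * σ / 3) * t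
        = Cc * (‖ξ‖ ^ (2 * σ / 3) * t) := by rw [hCc]; ring
    have e3 : -(η - 1) * ‖ξ‖ ^ (2 * σ / 3) * t / 2
        = -(ν * (‖ξ‖ ^ (2 * σ / 3) * t)) := by rw [hν]; ring
    rw [e1, e2, e3]
  have hFnonneg : ∀ t : ℝ, ∀ ξ : E, 0 ≤ F t ξ := by
    intro t ξ
    simp only [hF]
    have := Real.rpow_nonneg (norm_nonneg ξ) (-(8 : ℝ) * σ / 3)
    positivity
  have hFmeas : ∀ t : ℝ, Measurable (F t) := by
    intro t; simp only [hF]; fun_prop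
  -- pointwise bound 1 (for all t ≥ 0)
  have hpt1 : ∀ t : ℝ, 0 ≤ t → ∀ ξ : E, F t ξ ≤ L ^ 2 * t ^ 2 * ‖ξ‖ ^ q₁ := by
    intro t ht ξ
    rcases eq_or_ne ξ 0 with h0 | h0
    · rw [hFval, h0]
      simp only [norm_zero]
      rw [Real.zero_rpow hq₁0.ne,
        Real.zero_rpow (ne_of_lt (by linarith : -(8:ℝ) * σ / 3 < 0))]
      simp
    · have hr : 0 < ‖ξ‖ := norm_pos_iff.mpr h0
      set x : ℝ := ‖ξ‖ ^ (2 * σ / 3) with hx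
      have hx0 : 0 < x := Real.rpow_pos_of_pos hr _
      have hs : 0 ≤ x * t := by positivity
      have hbd := hscalar_lin (x * t) hs
      rw [hFval]
      have hsq : (Real.exp (-(x * t)) - Real.cos (Cc * (x * t))
          * Real.exp (-(ν * (x * t)))) ^ 2 ≤ (L * (x * t)) ^ 2 := by
        rw [← sq_abs]
        exact pow_le_pow_left₀ (abs_nonneg _) hbd 2
      calc ‖ξ‖ ^ (-(8 : ℝ) * σ / 3) * (Real.exp (-(x * t)) - Real.cos (Cc * (x * t))
            * Real.exp (-(ν * (x * t)))) ^ 2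
          ≤ ‖ξ‖ ^ (-(8 : ℝ) * σ / 3) * (L * (x * t)) ^ 2 := by
            apply mul_le_mul_of_nonneg_left hsq (Real.rpow_nonneg (norm_nonneg _) _)
        _ = L ^ 2 * t ^ 2 * (‖ξ‖ ^ (-(8 : ℝ) * σ / 3) * x ^ 2) := by ring
        _ = L ^ 2 * t ^ 2 * ‖ξ‖ ^ q₁ := by
            have hx2 : x ^ 2 = ‖ξ‖ ^ (2 * σ / 3 + 2 * σ / 3) := by
              rw [pow_two, hx, ← Real.rpow_add hr]
            rw [hx2, ← Real.rpow_add hr,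
              show -(8:ℝ) * σ / 3 + (2 * σ / 3 + 2 * σ / 3) = q₁ from by rw [hq₁]; try ring]
  -- pointwise bound 2 (for t ≥ 1)
  have hpt2 : ∀ t : ℝ, 1 ≤ t → ∀ ξ : E, F t ξ ≤ C₄ * t ^ (-b) * ‖ξ‖ ^ q₂ := by
    intro t ht ξ
    have ht0 : 0 < t := lt_of_lt_of_le one_pos ht
    rcases eq_or_ne ξ 0 with h0 | h0
    · rw [hFval, h0]
      simp only [norm_zero]
      have hq₂0 : q₂ < 0 := lt_of_lt_of_le hq₂n (neg_nonpos.mpr (Nat.cast_nonneg n))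
      rw [Real.zero_rpow hq₂0.ne,
        Real.zero_rpow (ne_of_lt (by linarith : -(8:ℝ) * σ / 3 < 0))]
      simp
    · have hr : 0 < ‖ξ‖ := norm_pos_iff.mpr h0
      set x : ℝ := ‖ξ‖ ^ (2 * σ / 3) with hx
      have hx0 : 0 < x := Real.rpow_pos_of_pos hr _
      have hs0 : 0 < x * t := by positivity
      have hbd := hscalar_exp (x * t) hs0.le
      rw [hFval]
      have hu0 : 0 < 2 * ν * (x * t) := by positivity
      have hKbu := hKb (2 * ν * (x * t)) hu0.le
      have hexp_le : Real.exp (-(2 * ν * (x * t))) ≤ Kb * (2 * ν * (x * t)) ^ (-b) := by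
        have hpow : 0 < (2 * ν * (x * t)) ^ b := Real.rpow_pos_of_pos hu0 _
        rw [Real.rpow_neg hu0.le]
        calc Real.exp (-(2 * ν * (x * t)))
            = (2 * ν * (x * t)) ^ b * Real.exp (-(2 * ν * (x * t))) / (2 * ν * (x * t)) ^ b := by
              field_simp
          _ ≤ Kb / (2 * ν * (x * t)) ^ b := by gcongr
          _ = Kb * ((2 * ν * (x * t)) ^ b)⁻¹ := by rw [div_eq_mul_inv]
      have hsq : (Real.exp (-(x * t)) - Real.cos (Cc * (x * t))
          * Real.exp (-(ν * (x * t)))) ^ 2 ≤ 4 * Real.exp (-(2 * ν * (x * t))) := by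
        calc (Real.exp (-(x * t)) - Real.cos (Cc * (x * t)) * Real.exp (-(ν * (x * t)))) ^ 2
            = |Real.exp (-(x * t)) - Real.cos (Cc * (x * t)) * Real.exp (-(ν * (x * t)))| ^ 2 :=
              (sq_abs _).symm
          _ ≤ (2 * Real.exp (-(ν * (x * t)))) ^ 2 := pow_le_pow_left₀ (abs_nonneg _) hbd 2
          _ = 4 * Real.exp (-(2 * ν * (x * t))) := by
              rw [mul_pow,
                show Real.exp (-(ν * (x * t))) ^ 2
                  = Real.exp (-(ν * (x * t))) * Real.exp (-(ν * (x * t))) from pow_two _,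
                ← Real.exp_add]
              norm_num
              congr 1
              ring
      calc ‖ξ‖ ^ (-(8 : ℝ) * σ / 3) * (Real.exp (-(x * t)) - Real.cos (Cc * (x * t))
            * Real.exp (-(ν * (x * t)))) ^ 2
          ≤ ‖ξ‖ ^ (-(8 : ℝ) * σ / 3) * (4 * (Kb * (2 * ν * (x * t)) ^ (-b))) := by
            apply mul_le_mul_of_nonneg_left ?_ (Real.rpow_nonneg (norm_nonneg _) _)
            exact hsq.trans (by nlinarith [hexp_le])
        _ = C₄ * t ^ (-b) * ‖ξ‖ ^ q₂ := by
            have hsplit : (2 * ν * (x * t)) ^ (-b)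
                = (2 * ν) ^ (-b) * x ^ (-b) * t ^ (-b) := by
              rw [show 2 * ν * (x * t) = (2 * ν) * x * t from by ring,
                Real.mul_rpow (by positivity) ht0.le,
                Real.mul_rpow (by positivity) hx0.le]
            have hxq : ‖ξ‖ ^ (-(8:ℝ) * σ / 3) * x ^ (-b) = ‖ξ‖ ^ q₂ := by
              rw [hx, ← Real.rpow_mul (norm_nonneg _), ← Real.rpow_add hr,
                show -(8:ℝ) * σ / 3 + 2 * σ / 3 * (-b) = q₂ from by rw [hq₂]; try ring]
            calc ‖ξ‖ ^ (-(8:ℝ) * σ / 3) * (4 * (Kb * (2 * ν * (x * t)) ^ (-b)))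
                = 4 * Kb * (2 * ν) ^ (-b) * t ^ (-b)
                    * (‖ξ‖ ^ (-(8:ℝ) * σ / 3) * x ^ (-b)) := by rw [hsplit]; ring
              _ = C₄ * t ^ (-b) * ‖ξ‖ ^ q₂ := by rw [hxq, hC₄]; try ring
  -- endgame
  set W₁ : ℝ≥0∞ := ENNReal.ofReal (L^2) * (K₁ * ENNReal.ofReal (ε₀ ^ ((n:ℝ) + q₁))) with hW₁
  have hW₁top : W₁ ≠ ⊤ :=
    ENNReal.mul_ne_top ofReal_ne_top (ENNReal.mul_ne_top hK₁top ofReal_ne_top)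
  set W₂ : ℝ≥0∞ := ENNReal.ofReal (L^2) * K₁ + ENNReal.ofReal C₄ * K₂ with hW₂
  have hW₂top : W₂ ≠ ⊤ := by
    rw [hW₂]
    exact ENNReal.add_ne_top.mpr ⟨ENNReal.mul_ne_top ofReal_ne_top hK₁top,
      ENNReal.mul_ne_top ofReal_ne_top hK₂top⟩
  set C₁ : ℝ := Real.sqrt W₁.toReal with hC₁
  set C₂ : ℝ := Real.sqrt W₂.toReal with hC₂
  have hC₁0 : 0 ≤ C₁ := Real.sqrt_nonneg _
  have hC₂0 : 0 ≤ C₂ := Real.sqrt_nonneg _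
  set m₁ : ℝ := min 1 ((2:ℝ) ^ E1) with hm₁
  have hm₁0 : 0 < m₁ := lt_min one_pos (Real.rpow_pos_of_pos two_pos _)
  set m₂ : ℝ := max 1 ((2:ℝ) ^ (-E1)) with hm₂
  have hm₂1 : (1:ℝ) ≤ m₂ := le_max_left _ _
  refine ⟨max ((C₁+1)/m₁) ((C₂+1)*m₂), ?_, ?_⟩
  · exact lt_of_lt_of_le (div_pos (by linarith) hm₁0) (le_max_left _ _)
  · intro t ht
    have hPnn : (0:ℝ) ≤ (1+t) ^ E1 := Real.rpow_nonneg (by linarith) _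
    set B := Metric.closedBall (0:E) ε₀ with hB
    have hInt : (∫ ξ in B, F t ξ) = (∫⁻ ξ in B, ENNReal.ofReal (F t ξ)).toReal := by
      apply integral_eq_lintegral_of_nonneg_ae
      · exact Filter.Eventually.of_forall (fun ξ => hFnonneg t ξ)
      · exact (hFmeas t).aestronglyMeasurable
    have key : Real.sqrt (∫ ξ in B, F t ξ) ≤ max ((C₁+1)/m₁) ((C₂+1)*m₂) * (1+t) ^ E1 := by
      rcases le_total t 1 with hcase | hcase
      · -- small time: uniform bound
        have hpt : ∀ ξ : E, F t ξ ≤ L^2 * ‖ξ‖ ^ q₁ := by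
          intro ξ
          refine (hpt1 t ht ξ).trans ?_
          have h1 : t^2 ≤ 1 := by nlinarith
          have h2 : 0 ≤ ‖ξ‖ ^ q₁ := Real.rpow_nonneg (norm_nonneg _) _
          calc L ^ 2 * t ^ 2 * ‖ξ‖ ^ q₁ = (L^2 * ‖ξ‖ ^ q₁) * t^2 := by ring
            _ ≤ L^2 * ‖ξ‖ ^ q₁ :=
              mul_le_of_le_one_right (mul_nonneg (sq_nonneg L) h2) h1
        have hlint : (∫⁻ ξ in B, ENNReal.ofReal (F t ξ)) ≤ W₁ := by
          calc (∫⁻ ξ in B, ENNReal.ofReal (F t ξ))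
              ≤ ∫⁻ ξ in B, ENNReal.ofReal (L^2 * ‖ξ‖ ^ q₁) :=
                lintegral_mono (fun ξ => ENNReal.ofReal_le_ofReal (hpt ξ))
            _ = ∫⁻ ξ in B, ENNReal.ofReal (L^2) * ENNReal.ofReal (‖ξ‖ ^ q₁) := by
                simp_rw [ENNReal.ofReal_mul (sq_nonneg L)]
            _ = ENNReal.ofReal (L^2) * ∫⁻ ξ in B, ENNReal.ofReal (‖ξ‖ ^ q₁) :=
                lintegral_const_mul' _ _ ofReal_ne_top
            _ ≤ ENNReal.ofReal (L^2) * (K₁ * ENNReal.ofReal (ε₀ ^ ((n:ℝ) + q₁))) := by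
                gcongr
                exact hK₁ ε₀ hε0
        have hI : (∫ ξ in B, F t ξ) ≤ W₁.toReal := by
          rw [hInt]; exact ENNReal.toReal_mono hW₁top hlint
        have hs : Real.sqrt (∫ ξ in B, F t ξ) ≤ C₁ := by
          rw [hC₁]; exact Real.sqrt_le_sqrt hI
        have hP : m₁ ≤ (1+t) ^ E1 := by
          rcases le_or_gt 0 E1 with hE | hE
          · calc m₁ ≤ 1 := min_le_left _ _
              _ = (1:ℝ) ^ E1 := (Real.one_rpow _).symm
              _ ≤ (1+t) ^ E1 := Real.rpow_le_rpow (by norm_num) (by linarith) hE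
          · calc m₁ ≤ (2:ℝ) ^ E1 := min_le_right _ _
              _ ≤ (1+t) ^ E1 := Real.rpow_le_rpow_of_nonpos (by linarith) (by linarith) hE.le
        calc Real.sqrt (∫ ξ in B, F t ξ) ≤ C₁ := hs
          _ ≤ ((C₁+1)/m₁) * m₁ := by
              rw [div_mul_cancel₀ _ hm₁0.ne']; linarith
          _ ≤ ((C₁+1)/m₁) * ((1+t) ^ E1) :=
              mul_le_mul_of_nonneg_left hP (div_nonneg (by linarith) hm₁0.le)
          _ ≤ max ((C₁+1)/m₁) ((C₂+1)*m₂) * (1+t) ^ E1 :=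
              mul_le_mul_of_nonneg_right (le_max_left _ _) hPnn
      · -- large time
        have ht0 : 0 < t := lt_of_lt_of_le one_pos hcase
        set ρ : ℝ := t ^ (-(3:ℝ)/(2*σ)) with hρdef
        have hρ0 : 0 < ρ := Real.rpow_pos_of_pos ht0 _
        have hid1 : t^2 * ρ ^ ((n:ℝ) + q₁) = t ^ (2*E1) := by
          rw [hρdef, ← Real.rpow_natCast t 2, ← Real.rpow_mul ht0.le, ← Real.rpow_add ht0]
          congr 1
          rw [hq₁, hE1]
          field_simp
          ring
        have hid2 : t^(-b) * ρ ^ ((n:ℝ) + q₂) = t ^ (2*E1) := by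
          rw [hρdef, ← Real.rpow_mul ht0.le, ← Real.rpow_add ht0]
          congr 1
          rw [hq₂, hE1]
          field_simp
          ring
        have hsub : B ⊆ closedBall (0:E) ρ ∪ (closedBall (0:E) ρ)ᶜ := by
          rw [Set.union_compl_self]; exact Set.subset_univ _
        have hlint : (∫⁻ ξ in B, ENNReal.ofReal (F t ξ)) ≤ W₂ * ENNReal.ofReal (t ^ (2*E1)) := by
          calc (∫⁻ ξ in B, ENNReal.ofReal (F t ξ))
              ≤ ∫⁻ ξ in closedBall (0:E) ρ ∪ (closedBall (0:E) ρ)ᶜ,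
                  ENNReal.ofReal (F t ξ) := lintegral_mono_set hsub
            _ ≤ (∫⁻ ξ in closedBall (0:E) ρ, ENNReal.ofReal (F t ξ))
                  + ∫⁻ ξ in (closedBall (0:E) ρ)ᶜ, ENNReal.ofReal (F t ξ) :=
                lintegral_union_le _ _ _
            _ ≤ ENNReal.ofReal (L^2 * t^2) * (K₁ * ENNReal.ofReal (ρ ^ ((n:ℝ) + q₁)))
                  + ENNReal.ofReal (C₄ * t^(-b)) * (K₂ * ENNReal.ofReal (ρ ^ ((n:ℝ) + q₂))) := by
                gcongr ?_ + ?_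
                · calc (∫⁻ ξ in closedBall (0:E) ρ, ENNReal.ofReal (F t ξ))
                      ≤ ∫⁻ ξ in closedBall (0:E) ρ, ENNReal.ofReal (L^2 * t^2 * ‖ξ‖ ^ q₁) :=
                        lintegral_mono (fun ξ => ENNReal.ofReal_le_ofReal (by
                          have := hpt1 t ht ξ
                          calc F t ξ ≤ L ^ 2 * t ^ 2 * ‖ξ‖ ^ q₁ := this
                            _ = L^2 * t^2 * ‖ξ‖ ^ q₁ := by ring))
                    _ = ∫⁻ ξ in closedBall (0:E) ρ,
                          ENNReal.ofReal (L^2 * t^2) * ENNReal.ofReal (‖ξ‖ ^ q₁) := by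
                        simp_rw [ENNReal.ofReal_mul (by positivity : (0:ℝ) ≤ L^2 * t^2)]
                    _ = ENNReal.ofReal (L^2 * t^2)
                          * ∫⁻ ξ in closedBall (0:E) ρ, ENNReal.ofReal (‖ξ‖ ^ q₁) :=
                        lintegral_const_mul' _ _ ofReal_ne_top
                    _ ≤ ENNReal.ofReal (L^2 * t^2) * (K₁ * ENNReal.ofReal (ρ ^ ((n:ℝ) + q₁))) := by
                        gcongr
                        exact hK₁ ρ hρ0
                · calc (∫⁻ ξ in (closedBall (0:E) ρ)ᶜ, ENNReal.ofReal (F t ξ))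
                      ≤ ∫⁻ ξ in (closedBall (0:E) ρ)ᶜ, ENNReal.ofReal (C₄ * t^(-b) * ‖ξ‖ ^ q₂) :=
                        lintegral_mono (fun ξ => ENNReal.ofReal_le_ofReal (hpt2 t hcase ξ))
                    _ = ∫⁻ ξ in (closedBall (0:E) ρ)ᶜ,
                          ENNReal.ofReal (C₄ * t^(-b)) * ENNReal.ofReal (‖ξ‖ ^ q₂) := by
                        simp_rw [ENNReal.ofReal_mul (by positivity : (0:ℝ) ≤ C₄ * t^(-b))]
                    _ = ENNReal.ofReal (C₄ * t^(-b))
                          * ∫⁻ ξ in (closedBall (0:E) ρ)ᶜ, ENNReal.ofReal (‖ξ‖ ^ q₂) :=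
                        lintegral_const_mul' _ _ ofReal_ne_top
                    _ ≤ ENNReal.ofReal (C₄ * t^(-b)) * (K₂ * ENNReal.ofReal (ρ ^ ((n:ℝ) + q₂))) := by
                        gcongr
                        exact hK₂ ρ hρ0
            _ = W₂ * ENNReal.ofReal (t ^ (2*E1)) := by
                rw [ENNReal.ofReal_mul (sq_nonneg L),
                  ENNReal.ofReal_mul hC₄0.le, hW₂, add_mul]
                congr 1
                · rw [show ENNReal.ofReal (L^2) * ENNReal.ofReal (t^2)
                      * (K₁ * ENNReal.ofReal (ρ ^ ((n:ℝ) + q₁)))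
                      = (ENNReal.ofReal (L^2) * K₁)
                        * (ENNReal.ofReal (t^2) * ENNReal.ofReal (ρ ^ ((n:ℝ) + q₁))) from by ring,
                    ← ENNReal.ofReal_mul (sq_nonneg t), hid1]
                · rw [show ENNReal.ofReal C₄ * ENNReal.ofReal (t^(-b))
                      * (K₂ * ENNReal.ofReal (ρ ^ ((n:ℝ) + q₂)))
                      = (ENNReal.ofReal C₄ * K₂)
                        * (ENNReal.ofReal (t^(-b)) * ENNReal.ofReal (ρ ^ ((n:ℝ) + q₂))) from by ring,
                    ← ENNReal.ofReal_mul (Real.rpow_nonneg ht0.le _), hid2]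
        have hI : (∫ ξ in B, F t ξ) ≤ W₂.toReal * t ^ (2*E1) := by
          rw [hInt]
          have := ENNReal.toReal_mono (ENNReal.mul_ne_top hW₂top ofReal_ne_top) hlint
          rwa [ENNReal.toReal_mul, ENNReal.toReal_ofReal (Real.rpow_nonneg ht0.le _)] at this
        have hsq2 : t ^ (2*E1) = (t ^ E1)^2 := by
          rw [← Real.rpow_natCast (t ^ E1) 2, ← Real.rpow_mul ht0.le]
          congr 1
          push_cast
          ring
        have hs : Real.sqrt (∫ ξ in B, F t ξ) ≤ C₂ * t ^ E1 := by
          calc Real.sqrt (∫ ξ in B, F t ξ) ≤ Real.sqrt (W₂.toReal * t ^ (2*E1)) :=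
                Real.sqrt_le_sqrt hI
            _ = C₂ * Real.sqrt (t ^ (2*E1)) := by
                rw [hC₂, Real.sqrt_mul ENNReal.toReal_nonneg]
            _ = C₂ * t ^ E1 := by
                rw [hsq2, Real.sqrt_sq (Real.rpow_nonneg ht0.le _)]
        have hP : t ^ E1 ≤ m₂ * (1+t) ^ E1 := by
          rcases le_or_gt 0 E1 with hE | hE
          · calc t ^ E1 ≤ (1+t) ^ E1 := Real.rpow_le_rpow ht0.le (by linarith) hE
              _ = 1 * (1+t) ^ E1 := (one_mul _).symm
              _ ≤ m₂ * (1+t) ^ E1 := mul_le_mul_of_nonneg_right hm₂1 hPnn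
          · have h1 : (1+t)/2 ≤ t := by linarith
            have h2 : (0:ℝ) < (1+t)/2 := by linarith
            calc t ^ E1 ≤ ((1+t)/2) ^ E1 := Real.rpow_le_rpow_of_nonpos h2 h1 hE.le
              _ = (1+t) ^ E1 / (2:ℝ) ^ E1 := Real.div_rpow (by linarith) (by norm_num) E1
              _ = (2:ℝ) ^ (-E1) * (1+t) ^ E1 := by
                  rw [Real.rpow_neg (by norm_num : (0:ℝ) ≤ 2)]
                  field_simp
              _ ≤ m₂ * (1+t) ^ E1 := mul_le_mul_of_nonneg_right (le_max_right _ _) hPnn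
        calc Real.sqrt (∫ ξ in B, F t ξ) ≤ C₂ * t ^ E1 := hs
          _ ≤ C₂ * (m₂ * (1+t) ^ E1) := mul_le_mul_of_nonneg_left hP hC₂0
          _ = (C₂ * m₂) * (1+t) ^ E1 := by ring
          _ ≤ ((C₂+1)*m₂) * (1+t) ^ E1 :=
              mul_le_mul_of_nonneg_right
                (mul_le_mul_of_nonneg_right (by linarith) (by linarith)) hPnn
          _ ≤ max ((C₁+1)/m₁) ((C₂+1)*m₂) * (1+t) ^ E1 :=
              mul_le_mul_of_nonneg_right (le_max_right _ _) hPnn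
    exact key
end

section
/- Let η ∈ (1,3), C_η = √(3+2η-η²)/2, n > (4/3)σ with σ > 0. Then there exists C > 0 such that for all t ≥ 0, (∫_{|ξ| ≤ ε₀} |ξ|^{-8σ/3} sin²(C_η |ξ|^{2σ/3} t) e^{-(η-1)|ξ|^{2σ/3} t} dξ)^{1/2} ≤ C (1+t)^{-(3n-8σ)/(4σ)}. -/
open MeasureTheory Metric Set
open scoped ENNReal

set_option maxHeartbeats 2000000

lemma div_pow_le_exp (x : ℝ) (hx : 0 ≤ x) (k : ℕ) (hk : k ≠ 0) :
    (x / k) ^ k ≤ Real.exp x := by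
  have h1 : x / k ≤ Real.exp (x / k) :=
    le_trans (by linarith) (Real.add_one_le_exp _)
  calc (x / k) ^ k ≤ Real.exp (x / k) ^ k :=
        pow_le_pow_left₀ (div_nonneg hx (Nat.cast_nonneg k)) h1 k
    _ = Real.exp (k * (x / k)) := (Real.exp_nat_mul _ k).symm
    _ = Real.exp x := by
        rw [mul_div_cancel₀]
        exact Nat.cast_ne_zero.mpr hk

lemma tail_bound {a lam : ℝ} (ha : 0 < a) (hlam : 0 < lam) (m : ℕ) :
    ∃ K > 0, ∀ r : ℝ, 1 ≤ r →
      Real.exp (-(lam * r ^ a)) ≤ K * (1 + r) ^ (-(m : ℝ)) := by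
  set k : ℕ := ⌈(m : ℝ) / a⌉₊ + 1 with hk
  have hk0 : (0:ℝ) < k := by positivity
  refine ⟨2 ^ m * (k / lam) ^ k, by positivity, fun r hr => ?_⟩
  have hr0 : (0:ℝ) < r := lt_of_lt_of_le one_pos hr
  have hra : (0:ℝ) ≤ lam * r ^ a := by positivity
  -- key : (1+r)^m ≤ K * exp (lam * r^a)
  have key : (1 + r) ^ m ≤ 2 ^ m * (k / lam) ^ k * Real.exp (lam * r ^ a) := by
    have h1 : (1 + r) ^ m ≤ (2 * r) ^ m :=
      pow_le_pow_left₀ (by linarith) (by linarith) m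
    have h2 : r ^ (m : ℝ) ≤ r ^ (a * k) := by
      apply Real.rpow_le_rpow_of_exponent_le hr
      have : (m : ℝ) / a ≤ k := by
        calc (m : ℝ) / a ≤ ⌈(m : ℝ) / a⌉₊ := Nat.le_ceil _
          _ ≤ k := by exact_mod_cast Nat.le_succ _
      calc (m : ℝ) = a * ((m : ℝ) / a) := by field_simp
        _ ≤ a * k := by nlinarith
    have h3 : r ^ (a * k) = (r ^ a) ^ k := by
      rw [Real.rpow_mul hr0.le, Real.rpow_natCast]
    have h4 : (r ^ a) ^ k ≤ (k / lam) ^ k * Real.exp (lam * r ^ a) := by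
      have h5 : (lam * r ^ a / k) ^ k ≤ Real.exp (lam * r ^ a) :=
        div_pow_le_exp _ hra k (by omega)
      have h6 : (r ^ a) ^ k = (lam * r ^ a / k) ^ k * (k / lam) ^ k := by
        rw [← mul_pow]
        congr 1
        field_simp
      rw [h6]
      calc (lam * r ^ a / k) ^ k * (k / lam) ^ k
          ≤ Real.exp (lam * r ^ a) * (k / lam) ^ k := by
            apply mul_le_mul_of_nonneg_right h5; positivity
        _ = (k / lam) ^ k * Real.exp (lam * r ^ a) := by ring
    calc (1 + r) ^ m ≤ (2 * r) ^ m := h1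
      _ = 2 ^ m * r ^ m := mul_pow 2 r m
      _ = 2 ^ m * r ^ (m : ℝ) := by rw [Real.rpow_natCast]
      _ ≤ 2 ^ m * (r ^ a) ^ k := by
          rw [← h3]; exact mul_le_mul_of_nonneg_left h2 (by positivity)
      _ ≤ 2 ^ m * ((k / lam) ^ k * Real.exp (lam * r ^ a)) := by
          exact mul_le_mul_of_nonneg_left h4 (by positivity)
      _ = 2 ^ m * (k / lam) ^ k * Real.exp (lam * r ^ a) := by ring
  have hpos : (0:ℝ) < (1 + r) ^ m := by positivity
  rw [Real.exp_neg, Real.rpow_neg (by linarith : (0:ℝ) ≤ 1 + r), Real.rpow_natCast,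
    ← one_div, ← one_div, mul_one_div, div_le_div_iff₀ (Real.exp_pos _) hpos, one_mul]
  calc (1 + r) ^ m ≤ 2 ^ m * (k / lam) ^ k * Real.exp (lam * r ^ a) := key

lemma integrableOn_norm_rpow_ball {n : ℕ} {c : ℝ} (hc0 : 0 ≤ c) (hcn : c < n) :
    IntegrableOn (fun y : EuclideanSpace ℝ (Fin n) => ‖y‖ ^ (-c))
      (Metric.ball 0 1) volume := by
  constructor
  · exact (Measurable.aestronglyMeasurable (by fun_prop)).restrict
  · rw [hasFiniteIntegral_iff_ofReal (Filter.Eventually.of_forall fun y => by positivity)]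
    set S : ℕ → Set (EuclideanSpace ℝ (Fin n)) := fun k =>
      closedBall 0 ((2⁻¹ : ℝ) ^ k) \ closedBall 0 ((2⁻¹ : ℝ) ^ (k + 1)) with hS
    set B := volume (ball (0 : EuclideanSpace ℝ (Fin n)) 1) with hB
    have hBfin : B < ⊤ := measure_ball_lt_top
    -- inclusion of the punctured ball in the union of shells
    have hsub : ball (0 : EuclideanSpace ℝ (Fin n)) 1 ⊆ {0} ∪ ⋃ k, S k := by
      intro y hy
      rcases eq_or_ne y 0 with rfl | hy0
      · exact Or.inl rfl
      · have hy1 : ‖y‖ < 1 := by simpa using hy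
        have hy0' : 0 < ‖y‖ := norm_pos_iff.mpr hy0
        have hex : ∃ m : ℕ, (2⁻¹ : ℝ) ^ m < ‖y‖ := by
          obtain ⟨m, hm⟩ := exists_pow_lt_of_lt_one hy0' (by norm_num : (2⁻¹:ℝ) < 1)
          exact ⟨m, hm⟩
        classical
        set m := Nat.find hex with hm
        have hmspec : (2⁻¹ : ℝ) ^ m < ‖y‖ := Nat.find_spec hex
        have hm0 : m ≠ 0 := by
          intro h
          rw [h] at hmspec
          simp at hmspec
          linarith
        refine Or.inr (mem_iUnion.mpr ⟨m - 1, ?_⟩)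
        have hmin : ¬ (2⁻¹ : ℝ) ^ (m - 1) < ‖y‖ := Nat.find_min hex (by omega)
        constructor
        · simpa [mem_closedBall, dist_zero_right] using le_of_not_gt hmin
        · intro hmem
          have : ‖y‖ ≤ (2⁻¹ : ℝ) ^ (m - 1 + 1) := by
            simpa [mem_closedBall, dist_zero_right] using hmem
          rw [show m - 1 + 1 = m by omega] at this
          linarith
    calc ∫⁻ y in ball (0 : EuclideanSpace ℝ (Fin n)) 1, ENNReal.ofReal (‖y‖ ^ (-c))
        ≤ ∫⁻ y in {0} ∪ ⋃ k, S k, ENNReal.ofReal (‖y‖ ^ (-c)) :=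
          lintegral_mono_set hsub
      _ ≤ (∫⁻ y in ({0} : Set (EuclideanSpace ℝ (Fin n))), ENNReal.ofReal (‖y‖ ^ (-c)))
            + ∫⁻ y in ⋃ k, S k, ENNReal.ofReal (‖y‖ ^ (-c)) := lintegral_union_le _ _ _
      _ = ∫⁻ y in ⋃ k, S k, ENNReal.ofReal (‖y‖ ^ (-c)) := by
          have h0 : volume ({0} : Set (EuclideanSpace ℝ (Fin n))) = 0 := by
            have hn0 : n ≠ 0 := by
              rintro rfl; simp at hcn; linarith
            rw [← closedBall_zero (x := (0 : EuclideanSpace ℝ (Fin n))),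
              Measure.addHaar_closedBall _ _ le_rfl, finrank_euclideanSpace_fin,
              zero_pow hn0]
            simp
          rw [setLIntegral_measure_zero _ _ h0, zero_add]
      _ ≤ ∑' k, ∫⁻ y in S k, ENNReal.ofReal (‖y‖ ^ (-c)) := lintegral_iUnion_le _ _
      _ ≤ ∑' k, ENNReal.ofReal ((2:ℝ) ^ c * ((2:ℝ) ^ (c - (n:ℝ))) ^ k) * B := by
          apply ENNReal.tsum_le_tsum
          intro k
          have hmeas : MeasurableSet (S k) :=
            measurableSet_closedBall.diff measurableSet_closedBall
          have step1 : ∫⁻ y in S k, ENNReal.ofReal (‖y‖ ^ (-c))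
              ≤ ∫⁻ _ in S k, ENNReal.ofReal (((2⁻¹:ℝ) ^ (k+1)) ^ (-c)) := by
            apply setLIntegral_mono' hmeas
            intro y hy
            apply ENNReal.ofReal_le_ofReal
            apply Real.rpow_le_rpow_of_nonpos (by positivity)
            · have : ¬ ‖y‖ ≤ (2⁻¹:ℝ) ^ (k+1) := by
                simpa [mem_closedBall, dist_zero_right] using hy.2
              linarith
            · linarith
          have step2 : (∫⁻ _ in S k, ENNReal.ofReal (((2⁻¹:ℝ) ^ (k+1)) ^ (-c)) : ℝ≥0∞)
              = ENNReal.ofReal (((2⁻¹:ℝ) ^ (k+1)) ^ (-c)) * volume (S k) :=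
            setLIntegral_const _ _
          have step3 : volume (S k) ≤ ENNReal.ofReal (((2⁻¹:ℝ) ^ k) ^ n) * B := by
            calc volume (S k) ≤ volume (closedBall (0 : EuclideanSpace ℝ (Fin n)) ((2⁻¹:ℝ) ^ k)) :=
                  measure_mono diff_subset
              _ = ENNReal.ofReal (((2⁻¹:ℝ) ^ k) ^ n) * B := by
                  rw [Measure.addHaar_closedBall _ _ (by positivity), finrank_euclideanSpace_fin]
          have epow : ∀ m : ℕ, ((2⁻¹:ℝ) ^ m) = (2:ℝ) ^ (-(m:ℝ)) := by
            intro m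
            rw [← Real.rpow_natCast (2⁻¹:ℝ) m, ← Real.rpow_neg_one (2:ℝ),
              ← Real.rpow_mul (by norm_num : (0:ℝ) ≤ 2)]
            ring_nf
          have heq : (((2⁻¹:ℝ) ^ (k+1)) ^ (-c)) * ((2⁻¹:ℝ) ^ k) ^ n
              = (2:ℝ) ^ c * ((2:ℝ) ^ (c - (n:ℝ))) ^ k := by
            rw [epow (k+1), epow k,
              ← Real.rpow_mul (by norm_num : (0:ℝ) ≤ 2),
              ← Real.rpow_natCast ((2:ℝ) ^ (-(k:ℝ))) n,
              ← Real.rpow_mul (by norm_num : (0:ℝ) ≤ 2),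
              ← Real.rpow_natCast ((2:ℝ) ^ (c - (n:ℝ))) k,
              ← Real.rpow_mul (by norm_num : (0:ℝ) ≤ 2),
              ← Real.rpow_add (by norm_num : (0:ℝ) < 2),
              ← Real.rpow_add (by norm_num : (0:ℝ) < 2)]
            congr 1
            push_cast
            ring
          calc ∫⁻ y in S k, ENNReal.ofReal (‖y‖ ^ (-c))
              ≤ ENNReal.ofReal (((2⁻¹:ℝ) ^ (k+1)) ^ (-c)) * volume (S k) := by
                rw [← step2]; exact step1
            _ ≤ ENNReal.ofReal (((2⁻¹:ℝ) ^ (k+1)) ^ (-c))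
                  * (ENNReal.ofReal (((2⁻¹:ℝ) ^ k) ^ n) * B) :=
                mul_le_mul_right step3 _
            _ = ENNReal.ofReal ((2:ℝ) ^ c * ((2:ℝ) ^ (c - (n:ℝ))) ^ k) * B := by
                rw [← mul_assoc, ← ENNReal.ofReal_mul (by positivity), heq]
      _ < ⊤ := by
          have hq1 : ((2:ℝ) ^ (c - (n:ℝ))) < 1 :=
            Real.rpow_lt_one_of_one_lt_of_neg (by norm_num) (by linarith)
          have hq0 : (0:ℝ) ≤ (2:ℝ) ^ (c - (n:ℝ)) := by positivity
          have : ∀ k : ℕ, ENNReal.ofReal ((2:ℝ) ^ c * ((2:ℝ) ^ (c - (n:ℝ))) ^ k) * B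
              = (ENNReal.ofReal ((2:ℝ) ^ (c - (n:ℝ)))) ^ k * (ENNReal.ofReal ((2:ℝ) ^ c) * B) := by
            intro k
            rw [ENNReal.ofReal_mul (by positivity), ENNReal.ofReal_pow hq0]
            ring
          rw [tsum_congr this, ENNReal.tsum_mul_right, ENNReal.tsum_geometric]
          apply ENNReal.mul_lt_top
          · rw [ENNReal.inv_lt_top]
            have : ENNReal.ofReal ((2:ℝ) ^ (c - (n:ℝ))) < 1 := by
              rw [← ENNReal.ofReal_one]
              exact ENNReal.ofReal_lt_ofReal_iff_of_nonneg hq0 |>.mpr hq1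
            exact tsub_pos_iff_lt.mpr this
          · exact ENNReal.mul_lt_top ENNReal.ofReal_lt_top hBfin

lemma integrable_g {n : ℕ} {a c lam : ℝ} (ha : 0 < a) (hc0 : 0 ≤ c) (hcn : c < n)
    (hlam : 0 < lam) :
    Integrable (fun y : EuclideanSpace ℝ (Fin n) =>
      ‖y‖ ^ (-c) * Real.exp (-(lam * ‖y‖ ^ a))) volume := by
  have hmeas : AEStronglyMeasurable
      (fun y : EuclideanSpace ℝ (Fin n) => ‖y‖ ^ (-c) * Real.exp (-(lam * ‖y‖ ^ a)))
      volume := Measurable.aestronglyMeasurable (by fun_prop)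
  rw [← integrableOn_univ, ← Set.union_compl_self (Metric.ball (0 : EuclideanSpace ℝ (Fin n)) 1)]
  apply IntegrableOn.union
  · apply Integrable.mono' (integrableOn_norm_rpow_ball hc0 hcn) hmeas.restrict
    filter_upwards with y
    rw [Real.norm_eq_abs, abs_of_nonneg (by positivity)]
    calc ‖y‖ ^ (-c) * Real.exp (-(lam * ‖y‖ ^ a)) ≤ ‖y‖ ^ (-c) * 1 := by
          apply mul_le_mul_of_nonneg_left _ (by positivity)
          exact Real.exp_le_one_iff.mpr (by positivity |> neg_nonpos_of_nonneg)
      _ = ‖y‖ ^ (-c) := mul_one _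
  · obtain ⟨K, hK, hKb⟩ := tail_bound ha hlam (n + 1)
    have hint : Integrable (fun y : EuclideanSpace ℝ (Fin n) =>
        K * (1 + ‖y‖) ^ (-((n:ℝ) + 1))) volume := by
      apply Integrable.const_mul
      have := integrable_one_add_norm
        (E := EuclideanSpace ℝ (Fin n)) (μ := volume) (r := (n:ℝ) + 1)
        (by rw [finrank_euclideanSpace_fin]; linarith)
      exact this
    apply Integrable.mono' hint.integrableOn hmeas.restrict
    rw [ae_restrict_iff' measurableSet_ball.compl]
    filter_upwards with y hy
    have hy1 : 1 ≤ ‖y‖ := by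
      simp only [Set.mem_compl_iff, mem_ball, dist_zero_right, not_lt] at hy
      exact hy
    rw [Real.norm_eq_abs, abs_of_nonneg (by positivity)]
    calc ‖y‖ ^ (-c) * Real.exp (-(lam * ‖y‖ ^ a))
        ≤ 1 * Real.exp (-(lam * ‖y‖ ^ a)) := by
          apply mul_le_mul_of_nonneg_right _ (Real.exp_nonneg _)
          exact Real.rpow_le_one_of_one_le_of_nonpos hy1 (by linarith)
      _ = Real.exp (-(lam * ‖y‖ ^ a)) := one_mul _
      _ ≤ K * (1 + ‖y‖) ^ (-(((n:ℕ) + 1 : ℕ) : ℝ)) := hKb _ hy1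
      _ = K * (1 + ‖y‖) ^ (-((n:ℝ) + 1)) := by push_cast; ring_nf

/-- Upper bound for the oscillating multiplier (Lemma 2.2, estimate (A2)):
for η ∈ (1,3), C_η = √(3+2η-η²)/2 and n > (4/3)σ, the L² norm over {|ξ| ≤ ε₀} of
|ξ|^{-4σ/3} sin(C_η|ξ|^{2σ/3}t) e^{-(η-1)|ξ|^{2σ/3}t/2} is ≲ (1+t)^{-(3n-8σ)/(4σ)}. -/
theorem sine_multiplier_bound (n : ℕ) (η σ ε₀ : ℝ)
    (hη1 : 1 < η) (hη3 : η < 3) (hσ : 0 < σ) (hn : (n : ℝ) > 4 / 3 * σ)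
    (hε0 : 0 < ε₀) (hε1 : ε₀ < 1) :
    ∃ C > 0, ∀ t : ℝ, 0 ≤ t →
      Real.sqrt (∫ ξ in Metric.closedBall (0 : EuclideanSpace ℝ (Fin n)) ε₀,
          ‖ξ‖ ^ (-(8 : ℝ) * σ / 3) *
            Real.sin (Real.sqrt (3 + 2 * η - η ^ 2) / 2 * ‖ξ‖ ^ (2 * σ / 3) * t) ^ 2 *
            Real.exp (-(η - 1) * ‖ξ‖ ^ (2 * σ / 3) * t))
        ≤ C * (1 + t) ^ (-(3 * n - 8 * σ) / (4 * σ)) := by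
  set CC : ℝ := Real.sqrt (3 + 2 * η - η ^ 2) / 2 with hCCdef
  have hCC : 0 ≤ CC := by positivity
  set p : ℝ := (3 * (n : ℝ) - 8 * σ) / (4 * σ) with hpdef
  have hc0 : (0:ℝ) ≤ 4 * σ / 3 := by positivity
  have hcn : 4 * σ / 3 < (n : ℝ) := by linarith
  have hlam : (0:ℝ) < η - 1 := by linarith
  set g : EuclideanSpace ℝ (Fin n) → ℝ :=
    fun y => ‖y‖ ^ (-(4 * σ / 3)) * Real.exp (-((η - 1) * ‖y‖ ^ (2 * σ / 3))) with hgdef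
  have hg : Integrable g volume := integrable_g (by positivity) hc0 hcn hlam
  have hgnn : ∀ y, 0 ≤ g y := fun y => by rw [hgdef]; positivity
  set G : ℝ := ∫ y, g y with hGdef
  have hG0 : 0 ≤ G := integral_nonneg hgnn
  have hh : IntegrableOn (fun y : EuclideanSpace ℝ (Fin n) => ‖y‖ ^ (-(4 * σ / 3)))
      (Metric.ball 0 1) volume := integrableOn_norm_rpow_ball hc0 hcn
  set H : ℝ := ∫ y in Metric.ball (0 : EuclideanSpace ℝ (Fin n)) 1, ‖y‖ ^ (-(4 * σ / 3))
    with hHdef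
  have hH0 : 0 ≤ H := integral_nonneg fun y => by positivity
  -- constant
  refine ⟨(CC ^ 2 + 1) * (Real.sqrt G + Real.sqrt H + 1) * (2:ℝ) ^ |p|, by positivity, ?_⟩
  have baseG : CC * Real.sqrt G ≤ (CC ^ 2 + 1) * (Real.sqrt G + Real.sqrt H + 1) := by
    nlinarith [sq_nonneg (CC - 1), Real.sqrt_nonneg G, Real.sqrt_nonneg H, sq_nonneg CC,
      mul_nonneg (sq_nonneg CC) (Real.sqrt_nonneg H),
      mul_nonneg (sq_nonneg (CC-1)) (Real.sqrt_nonneg G)]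
  have baseH : CC * Real.sqrt H ≤ (CC ^ 2 + 1) * (Real.sqrt G + Real.sqrt H + 1) := by
    nlinarith [sq_nonneg (CC - 1), Real.sqrt_nonneg G, Real.sqrt_nonneg H, sq_nonneg CC,
      mul_nonneg (sq_nonneg CC) (Real.sqrt_nonneg G),
      mul_nonneg (sq_nonneg (CC-1)) (Real.sqrt_nonneg H)]
  -- regime claims
  have claim1 : ∀ t : ℝ, 0 ≤ t → t ≤ 1 → (2:ℝ) ^ (-|p|) ≤ (1 + t) ^ (-p) := by
    intro t ht hle
    rcases le_or_gt 0 (-p) with hp | hp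
    · calc (2:ℝ) ^ (-|p|) ≤ 1 :=
            Real.rpow_le_one_of_one_le_of_nonpos (by norm_num) (neg_nonpos_of_nonneg (abs_nonneg p))
        _ = (1:ℝ) ^ (-p) := (Real.one_rpow _).symm
        _ ≤ (1 + t) ^ (-p) := Real.rpow_le_rpow (by norm_num) (by linarith) hp
    · have hp0 : 0 < p := by linarith
      rw [abs_of_pos hp0]
      exact Real.rpow_le_rpow_of_nonpos (by linarith) (by linarith) (by linarith)
  have claim2 : ∀ t : ℝ, 1 ≤ t → t ^ (-p) ≤ (2:ℝ) ^ |p| * (1 + t) ^ (-p) := by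
    intro t hle
    have ht0 : (0:ℝ) < t := by linarith
    rcases le_or_gt p 0 with hp | hp
    · have h1 : t ^ (-p) ≤ (1 + t) ^ (-p) :=
        Real.rpow_le_rpow ht0.le (by linarith) (by linarith)
      have h2 : (1:ℝ) ≤ (2:ℝ) ^ |p| := by
        calc (1:ℝ) = (2:ℝ) ^ (0:ℝ) := (Real.rpow_zero 2).symm
          _ ≤ (2:ℝ) ^ |p| := Real.rpow_le_rpow_of_exponent_le (by norm_num) (abs_nonneg p)
      calc t ^ (-p) ≤ (1 + t) ^ (-p) := h1
        _ ≤ (2:ℝ) ^ |p| * (1 + t) ^ (-p) := le_mul_of_one_le_left (by positivity) h2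
    · rw [abs_of_pos hp]
      have h1 : t ^ (-p) ≤ ((1 + t) / 2) ^ (-p) := by
        apply Real.rpow_le_rpow_of_nonpos (by linarith) (by linarith) (by linarith)
      calc t ^ (-p) ≤ ((1 + t) / 2) ^ (-p) := h1
        _ = (2:ℝ) ^ p * (1 + t) ^ (-p) := by
            rw [Real.div_rpow (by linarith) (by norm_num), Real.rpow_neg (by norm_num : (0:ℝ) ≤ 2),
              div_eq_mul_inv, inv_inv]
            ring
  intro t ht
  rw [show (-(3 * (n:ℝ) - 8 * σ) / (4 * σ)) = -p by rw [hpdef, neg_div]]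
  -- pointwise key bound
  have KB : ∀ ξ : EuclideanSpace ℝ (Fin n),
      ‖ξ‖ ^ (-(8 : ℝ) * σ / 3) * Real.sin (CC * ‖ξ‖ ^ (2 * σ / 3) * t) ^ 2 *
        Real.exp (-(η - 1) * ‖ξ‖ ^ (2 * σ / 3) * t)
      ≤ CC ^ 2 * t ^ 2 *
        (‖ξ‖ ^ (-(4 * σ / 3)) * Real.exp (-(η - 1) * ‖ξ‖ ^ (2 * σ / 3) * t)) := by
    intro ξ
    rcases eq_or_ne (‖ξ‖) 0 with h0 | h0
    · rw [h0, Real.zero_rpow (ne_of_lt (by nlinarith : (-8:ℝ) * σ / 3 < 0)),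
        Real.zero_rpow (ne_of_lt (by nlinarith : -(4 * σ / 3) < (0:ℝ)))]
      simp
    · have hr : 0 < ‖ξ‖ := lt_of_le_of_ne (norm_nonneg ξ) (Ne.symm h0)
      have hsin : Real.sin (CC * ‖ξ‖ ^ (2 * σ / 3) * t) ^ 2
          ≤ (CC * ‖ξ‖ ^ (2 * σ / 3) * t) ^ 2 := Real.sin_sq_le_sq
      have hmul : ‖ξ‖ ^ (-(8 : ℝ) * σ / 3) * (‖ξ‖ ^ (2 * σ / 3)) ^ 2
          = ‖ξ‖ ^ (-(4 * σ / 3)) := by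
        rw [← Real.rpow_natCast (‖ξ‖ ^ (2 * σ / 3)) 2, ← Real.rpow_mul (norm_nonneg ξ),
          ← Real.rpow_add hr]
        congr 1
        push_cast
        ring
      calc ‖ξ‖ ^ (-(8 : ℝ) * σ / 3) * Real.sin (CC * ‖ξ‖ ^ (2 * σ / 3) * t) ^ 2 *
            Real.exp (-(η - 1) * ‖ξ‖ ^ (2 * σ / 3) * t)
          ≤ ‖ξ‖ ^ (-(8 : ℝ) * σ / 3) * (CC * ‖ξ‖ ^ (2 * σ / 3) * t) ^ 2 *
            Real.exp (-(η - 1) * ‖ξ‖ ^ (2 * σ / 3) * t) := by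
            apply mul_le_mul_of_nonneg_right _ (Real.exp_nonneg _)
            exact mul_le_mul_of_nonneg_left hsin (by positivity)
        _ = CC ^ 2 * t ^ 2 *
            (‖ξ‖ ^ (-(4 * σ / 3)) * Real.exp (-(η - 1) * ‖ξ‖ ^ (2 * σ / 3) * t)) := by
            linear_combination (CC ^ 2 * t ^ 2 *
              Real.exp (-(η - 1) * ‖ξ‖ ^ (2 * σ / 3) * t)) * hmul
  rcases eq_or_lt_of_le ht with rfl | ht0
  · -- t = 0
    have hzero : (∫ ξ in Metric.closedBall (0 : EuclideanSpace ℝ (Fin n)) ε₀,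
        ‖ξ‖ ^ (-(8 : ℝ) * σ / 3) * Real.sin (CC * ‖ξ‖ ^ (2 * σ / 3) * 0) ^ 2 *
          Real.exp (-(η - 1) * ‖ξ‖ ^ (2 * σ / 3) * 0)) = 0 := by
      rw [setIntegral_congr_fun measurableSet_closedBall
        (fun ξ _ => by simp : EqOn _ (fun _ => (0:ℝ)) _), integral_zero]
    rw [hzero, Real.sqrt_zero]
    positivity
  · rcases le_or_gt t 1 with hle1 | hgt1
    · -- small times
      have hFb : ∀ ξ : EuclideanSpace ℝ (Fin n),
          ‖ξ‖ ^ (-(8 : ℝ) * σ / 3) * Real.sin (CC * ‖ξ‖ ^ (2 * σ / 3) * t) ^ 2 *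
            Real.exp (-(η - 1) * ‖ξ‖ ^ (2 * σ / 3) * t)
          ≤ CC ^ 2 * ‖ξ‖ ^ (-(4 * σ / 3)) := by
        intro ξ
        refine (KB ξ).trans ?_
        have hex : Real.exp (-(η - 1) * ‖ξ‖ ^ (2 * σ / 3) * t) ≤ 1 := by
          rw [Real.exp_le_one_iff]
          have h1 := Real.rpow_nonneg (norm_nonneg ξ) (2 * σ / 3)
          nlinarith [mul_nonneg (mul_nonneg hlam.le h1) ht0.le]
        have ht2 : t ^ 2 ≤ 1 := by nlinarith
        calc CC ^ 2 * t ^ 2 * (‖ξ‖ ^ (-(4 * σ / 3)) *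
                Real.exp (-(η - 1) * ‖ξ‖ ^ (2 * σ / 3) * t))
            = (CC ^ 2 * ‖ξ‖ ^ (-(4 * σ / 3))) *
                (t ^ 2 * Real.exp (-(η - 1) * ‖ξ‖ ^ (2 * σ / 3) * t)) := by ring
          _ ≤ (CC ^ 2 * ‖ξ‖ ^ (-(4 * σ / 3))) * 1 := by
              apply mul_le_mul_of_nonneg_left _ (by positivity)
              exact mul_le_one₀ ht2 (Real.exp_nonneg _) hex
          _ = CC ^ 2 * ‖ξ‖ ^ (-(4 * σ / 3)) := mul_one _
      have hmono : (∫ ξ in Metric.closedBall (0 : EuclideanSpace ℝ (Fin n)) ε₀,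
          ‖ξ‖ ^ (-(8 : ℝ) * σ / 3) * Real.sin (CC * ‖ξ‖ ^ (2 * σ / 3) * t) ^ 2 *
            Real.exp (-(η - 1) * ‖ξ‖ ^ (2 * σ / 3) * t))
          ≤ ∫ ξ in Metric.closedBall (0 : EuclideanSpace ℝ (Fin n)) ε₀,
            CC ^ 2 * ‖ξ‖ ^ (-(4 * σ / 3)) := by
        apply integral_mono_of_nonneg
          (Filter.Eventually.of_forall (fun ξ => by positivity))
          ((hh.mono_set (closedBall_subset_ball hε1)).const_mul (CC ^ 2))
          (Filter.Eventually.of_forall hFb)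
      have hmono2 : (∫ ξ in Metric.closedBall (0 : EuclideanSpace ℝ (Fin n)) ε₀,
          CC ^ 2 * ‖ξ‖ ^ (-(4 * σ / 3))) ≤ CC ^ 2 * H := by
        rw [integral_const_mul]
        apply mul_le_mul_of_nonneg_left _ (by positivity)
        exact setIntegral_mono_set hh
          (Filter.Eventually.of_forall fun ξ => by positivity)
          ((closedBall_subset_ball hε1).eventuallyLE)
      calc Real.sqrt (∫ ξ in Metric.closedBall (0 : EuclideanSpace ℝ (Fin n)) ε₀,
              ‖ξ‖ ^ (-(8 : ℝ) * σ / 3) * Real.sin (CC * ‖ξ‖ ^ (2 * σ / 3) * t) ^ 2 *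
                Real.exp (-(η - 1) * ‖ξ‖ ^ (2 * σ / 3) * t))
          ≤ Real.sqrt (CC ^ 2 * H) := Real.sqrt_le_sqrt (hmono.trans hmono2)
        _ = CC * Real.sqrt H := by
            rw [Real.sqrt_mul (sq_nonneg CC), Real.sqrt_sq hCC]
        _ ≤ (CC ^ 2 + 1) * (Real.sqrt G + Real.sqrt H + 1) *
              ((2:ℝ) ^ |p| * (2:ℝ) ^ (-|p|)) := by
            rw [← Real.rpow_add (by norm_num : (0:ℝ) < 2), add_neg_cancel,
              Real.rpow_zero, mul_one]
            exact baseH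
        _ ≤ (CC ^ 2 + 1) * (Real.sqrt G + Real.sqrt H + 1) *
              ((2:ℝ) ^ |p| * (1 + t) ^ (-p)) := by
            apply mul_le_mul_of_nonneg_left _ (by positivity)
            exact mul_le_mul_of_nonneg_left (claim1 t ht hle1) (by positivity)
        _ = (CC ^ 2 + 1) * (Real.sqrt G + Real.sqrt H + 1) * (2:ℝ) ^ |p| *
              (1 + t) ^ (-p) := by ring
    · -- large times
      set s : ℝ := t ^ ((3:ℝ)/(2*σ)) with hsdef
      have hs : 0 < s := Real.rpow_pos_of_pos ht0 _
      have hgt : ∀ ξ : EuclideanSpace ℝ (Fin n),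
          ‖ξ‖ ^ (-(4 * σ / 3)) * Real.exp (-(η - 1) * ‖ξ‖ ^ (2 * σ / 3) * t)
          = s ^ (4*σ/3) * g (s • ξ) := by
        intro ξ
        have hnorm : ‖s • ξ‖ = s * ‖ξ‖ := by
          rw [norm_smul, Real.norm_eq_abs, abs_of_pos hs]
        have hsa : s ^ (2*σ/3) = t := by
          rw [hsdef, ← Real.rpow_mul ht0.le,
            show (3:ℝ)/(2*σ) * (2*σ/3) = 1 by field_simp]
          exact Real.rpow_one t
        have hss : s ^ (4*σ/3) * s ^ (-(4*σ/3)) = 1 := by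
          rw [← Real.rpow_add hs]; simp
        rw [hgdef]
        simp only
        rw [hnorm, Real.mul_rpow hs.le (norm_nonneg ξ), Real.mul_rpow hs.le (norm_nonneg ξ),
          hsa]
        rw [show Real.exp (-((η - 1) * (t * ‖ξ‖ ^ (2*σ/3))))
          = Real.exp (-(η - 1) * ‖ξ‖ ^ (2*σ/3) * t) by ring_nf]
        linear_combination -(‖ξ‖ ^ (-(4*σ/3)) *
          Real.exp (-(η - 1) * ‖ξ‖ ^ (2*σ/3) * t)) * hss
      have hψint : Integrable
          (fun ξ : EuclideanSpace ℝ (Fin n) =>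
            CC ^ 2 * t ^ 2 * (s ^ (4*σ/3) * g (s • ξ))) volume :=
        ((hg.comp_smul hs.ne').const_mul (s ^ (4*σ/3))).const_mul (CC ^ 2 * t ^ 2)
      have hIb : (∫ ξ in Metric.closedBall (0 : EuclideanSpace ℝ (Fin n)) ε₀,
          ‖ξ‖ ^ (-(8 : ℝ) * σ / 3) * Real.sin (CC * ‖ξ‖ ^ (2 * σ / 3) * t) ^ 2 *
            Real.exp (-(η - 1) * ‖ξ‖ ^ (2 * σ / 3) * t))
          ≤ CC ^ 2 * t ^ 2 * (s ^ (4*σ/3) * (((s ^ (n:ℕ)) : ℝ)⁻¹ * G)) := by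
        calc (∫ ξ in Metric.closedBall (0 : EuclideanSpace ℝ (Fin n)) ε₀,
            ‖ξ‖ ^ (-(8 : ℝ) * σ / 3) * Real.sin (CC * ‖ξ‖ ^ (2 * σ / 3) * t) ^ 2 *
              Real.exp (-(η - 1) * ‖ξ‖ ^ (2 * σ / 3) * t))
            ≤ ∫ ξ in Metric.closedBall (0 : EuclideanSpace ℝ (Fin n)) ε₀,
              CC ^ 2 * t ^ 2 * (s ^ (4*σ/3) * g (s • ξ)) := by
              apply integral_mono_of_nonneg
               (Filter.Eventually.of_forall (fun ξ => by positivity))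
               hψint.integrableOn
               (Filter.Eventually.of_forall (fun ξ => (KB ξ).trans_eq (by rw [hgt ξ])))
          _ ≤ ∫ ξ, CC ^ 2 * t ^ 2 * (s ^ (4*σ/3) * g (s • ξ)) := by
              apply setIntegral_le_integral hψint
              exact Filter.Eventually.of_forall fun ξ =>
                mul_nonneg (by positivity) (mul_nonneg (by positivity) (hgnn _))
          _ = CC ^ 2 * t ^ 2 * (s ^ (4*σ/3) * ∫ ξ, g (s • ξ)) := by
              rw [integral_const_mul, integral_const_mul]
          _ = CC ^ 2 * t ^ 2 * (s ^ (4*σ/3) * (((s ^ (n:ℕ)) : ℝ)⁻¹ * G)) := by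
              rw [Measure.integral_comp_smul volume g s, finrank_euclideanSpace_fin,
                smul_eq_mul, abs_of_nonneg (by positivity : (0:ℝ) ≤ ((s ^ (n:ℕ)) : ℝ)⁻¹)]
      have hcomb : t ^ (2:ℕ) * (s ^ (4*σ/3) * ((s ^ (n:ℕ) : ℝ))⁻¹) = (t ^ (-p)) ^ (2:ℕ) := by
        have e1 : s ^ (4*σ/3) = t ^ ((3:ℝ)/(2*σ) * (4*σ/3)) := by
          rw [hsdef, ← Real.rpow_mul ht0.le]
        have e2 : ((s ^ (n:ℕ) : ℝ))⁻¹ = t ^ (-((3:ℝ)/(2*σ) * n)) := by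
          rw [hsdef, ← Real.rpow_natCast (t ^ ((3:ℝ)/(2*σ))) n, ← Real.rpow_mul ht0.le,
            ← Real.rpow_neg ht0.le]
        have e3 : (t:ℝ) ^ (2:ℕ) = t ^ ((2:ℕ):ℝ) := (Real.rpow_natCast t 2).symm
        have e4 : (t ^ (-p)) ^ (2:ℕ) = t ^ (-p * ((2:ℕ):ℝ)) := by
          rw [← Real.rpow_natCast (t ^ (-p)) 2, ← Real.rpow_mul ht0.le]
        rw [e1, e2, e3, e4, ← Real.rpow_add ht0, ← Real.rpow_add ht0]
        congr 1
        push_cast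
        have hσ' : σ ≠ 0 := ne_of_gt hσ
        rw [hpdef]
        field_simp
        ring
      have hsq : CC ^ 2 * t ^ 2 * (s ^ (4*σ/3) * (((s ^ (n:ℕ)) : ℝ)⁻¹ * G))
          = (CC * Real.sqrt G * t ^ (-p)) ^ 2 := by
        have h2 : Real.sqrt G ^ 2 = G := Real.sq_sqrt hG0
        calc CC ^ 2 * t ^ 2 * (s ^ (4*σ/3) * (((s ^ (n:ℕ)) : ℝ)⁻¹ * G))
            = CC ^ 2 * (t ^ (2:ℕ) * (s ^ (4*σ/3) * ((s ^ (n:ℕ) : ℝ))⁻¹)) * G := by ring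
          _ = CC ^ 2 * (t ^ (-p)) ^ (2:ℕ) * G := by rw [hcomb]
          _ = (CC * Real.sqrt G * t ^ (-p)) ^ 2 := by rw [mul_pow, mul_pow, h2]; ring
      calc Real.sqrt (∫ ξ in Metric.closedBall (0 : EuclideanSpace ℝ (Fin n)) ε₀,
              ‖ξ‖ ^ (-(8 : ℝ) * σ / 3) * Real.sin (CC * ‖ξ‖ ^ (2 * σ / 3) * t) ^ 2 *
                Real.exp (-(η - 1) * ‖ξ‖ ^ (2 * σ / 3) * t))
          ≤ Real.sqrt ((CC * Real.sqrt G * t ^ (-p)) ^ 2) :=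
            Real.sqrt_le_sqrt (hIb.trans_eq hsq)
        _ = CC * Real.sqrt G * t ^ (-p) := Real.sqrt_sq (by positivity)
        _ ≤ CC * Real.sqrt G * ((2:ℝ) ^ |p| * (1 + t) ^ (-p)) :=
            mul_le_mul_of_nonneg_left (claim2 t hgt1.le) (by positivity)
        _ ≤ (CC ^ 2 + 1) * (Real.sqrt G + Real.sqrt H + 1) *
              ((2:ℝ) ^ |p| * (1 + t) ^ (-p)) :=
            mul_le_mul_of_nonneg_right baseG (by positivity)
        _ = (CC ^ 2 + 1) * (Real.sqrt G + Real.sqrt H + 1) * (2:ℝ) ^ |p| *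
              (1 + t) ^ (-p) := by ring
end

section
/- Let p > 1, R₀ ≥ e, and let Y : [R₀, ∞) → (0,∞) be differentiable, nondecreasing, and satisfy Y(R)^p ≤ K·R·Y'(R) for all R ∈ [R₀, T) with some K > 0, together with the lower bound Y(R) ≥ δ·ln R for all R ∈ [R₀, T) with δ > 0. Then ln√T ≤ C δ^{-(p-1)} for some constant C depending only on p and K; in particular T ≤ exp(2C δ^{1-p}). -/
/-- ODE-type lifespan argument in the critical case: if Y > 0 is nondecreasing and
differentiable with Y(R)^p ≤ K·R·Y'(R) and Y(R) ≥ δ·ln R on [R₀, T), then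
ln√T ≤ C δ^{-(p-1)} with C depending only on p and K; in particular T ≤ exp(2Cδ^{1-p}). -/
theorem lifespan_ode_argument (p K : ℝ) (hp : 1 < p) (hK : 0 < K) :
    ∃ C > 0, ∀ (R₀ T δ : ℝ) (Y : ℝ → ℝ),
      Real.exp 1 ≤ R₀ → R₀ ^ 2 < T → 0 < δ →
      (∀ R, R₀ ≤ R → DifferentiableAt ℝ Y R) →
      MonotoneOn Y (Set.Ici R₀) →
      (∀ R, R₀ ≤ R → R < T → 0 < Y R) →
      (∀ R, R₀ ≤ R → R < T → Y R ^ p ≤ K * R * deriv Y R) →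
      (∀ R, R₀ ≤ R → R < T → δ * Real.log R ≤ Y R) →
      Real.log (Real.sqrt T) ≤ C * δ ^ (-(p - 1)) ∧ T ≤ Real.exp (2 * C * δ ^ (1 - p)) := by
  have hp1 : (0:ℝ) < p - 1 := by linarith
  refine ⟨K / (p - 1), div_pos hK hp1, ?_⟩
  intro R₀ T δ Y hR₀ hT hδ hdiff hmono hpos hode hlow
  have hR₀1 : (1:ℝ) < R₀ := lt_of_lt_of_le (by
    have := Real.exp_one_gt_d9; linarith) hR₀
  have hR₀0 : (0:ℝ) < R₀ := by linarith
  have hlogR₀ : 1 ≤ Real.log R₀ := (Real.le_log_iff_exp_le hR₀0).2 hR₀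
  have hT0 : 0 < T := lt_trans (by positivity) hT
  -- key estimate for S < T
  have key : ∀ S, R₀ ^ 2 ≤ S → S < T →
      Real.log (Real.sqrt S) ≤ K / (p - 1) * δ ^ (1 - p) := by
    intro S hS hST
    set s := Real.sqrt S with hs
    have hS0 : (0:ℝ) ≤ S := le_trans (by positivity) hS
    have hsR₀ : R₀ ≤ s := by
      have := Real.sqrt_le_sqrt hS
      rwa [Real.sqrt_sq hR₀0.le] at this
    have hs1 : 1 ≤ s := le_trans hR₀1.le hsR₀
    have hsS : s ≤ S := by
      have h2 : s * s = S := Real.mul_self_sqrt hS0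
      nlinarith
    have hmem : ∀ x ∈ Set.Icc s S, R₀ ≤ x ∧ x < T := by
      intro x hx
      exact ⟨le_trans hsR₀ hx.1, lt_of_le_of_lt hx.2 hST⟩
    set H : ℝ → ℝ := fun R => Y R ^ (1 - p) + (p - 1) / K * Real.log R with hH
    have hderiv : ∀ x, R₀ ≤ x → x < T →
        HasDerivAt H (deriv Y x * (1 - p) * Y x ^ (1 - p - 1) + (p - 1) / K * x⁻¹) x := by
      intro x hx1 hx2
      have hx0 : (0:ℝ) < x := lt_of_lt_of_le hR₀0 hx1
      have hYx := (hdiff x hx1).hasDerivAt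
      have h1 : HasDerivAt (fun R => Y R ^ (1 - p)) (deriv Y x * (1 - p) * Y x ^ (1 - p - 1)) x :=
        hYx.rpow_const (Or.inl (ne_of_gt (hpos x hx1 hx2)))
      have h2 : HasDerivAt (fun R => (p - 1) / K * Real.log R) ((p - 1) / K * x⁻¹) x :=
        (Real.hasDerivAt_log (ne_of_gt hx0)).const_mul _
      exact h1.add h2
    have hanti : AntitoneOn H (Set.Icc s S) := by
      apply antitoneOn_of_deriv_nonpos (convex_Icc s S)
      · intro x hx
        obtain ⟨hx1, hx2⟩ := hmem x hx
        exact ((hderiv x hx1 hx2).differentiableAt).continuousAt.continuousWithinAt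
      · intro x hx
        rw [interior_Icc] at hx
        obtain ⟨hx1, hx2⟩ := hmem x (Set.mem_Icc_of_Ioo hx)
        exact ((hderiv x hx1 hx2).differentiableAt).differentiableWithinAt
      · intro x hx
        rw [interior_Icc] at hx
        obtain ⟨hx1, hx2⟩ := hmem x (Set.mem_Icc_of_Ioo hx)
        have hx0 : (0:ℝ) < x := lt_of_lt_of_le hR₀0 hx1
        rw [(hderiv x hx1 hx2).deriv]
        have hY0 : 0 < Y x := hpos x hx1 hx2
        have hode' := hode x hx1 hx2
        have ha : (0:ℝ) < Y x ^ (-p) := Real.rpow_pos_of_pos hY0 _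
        have hb : (0:ℝ) < Y x ^ p := Real.rpow_pos_of_pos hY0 _
        have hprod : Y x ^ (-p) * Y x ^ p = 1 := by
          rw [← Real.rpow_add hY0]; simp
        have hd : 1 ≤ K * x * (Y x ^ (-p) * deriv Y x) := by
          have := mul_le_mul_of_nonneg_left hode' ha.le
          nlinarith
        have hexp : (1:ℝ) - p - 1 = -p := by ring
        rw [hexp]
        have h3 : (p - 1) / K * x⁻¹ ≤ (p - 1) * (Y x ^ (-p) * deriv Y x) := by
          rw [← div_eq_mul_inv, div_div, div_le_iff₀ (by positivity : (0:ℝ) < K * x)]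
          nlinarith
        nlinarith
    have hHS : H S ≤ H s :=
      hanti (Set.mem_Icc.2 ⟨le_refl s, hsS⟩) (Set.mem_Icc.2 ⟨hsS, le_refl S⟩) hsS
    have hlogs : Real.log s = Real.log S / 2 := Real.log_sqrt hS0
    have hlogs1 : 1 ≤ Real.log s := le_trans hlogR₀ (Real.log_le_log hR₀0 hsR₀)
    have hYS0 : 0 ≤ Y S ^ (1 - p) :=
      (Real.rpow_pos_of_pos (hpos S (le_trans hsR₀ hsS) hST) _).le
    have hmain : (p - 1) / K * Real.log s ≤ Y s ^ (1 - p) := by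
      have hLL : Real.log S - Real.log s = Real.log s := by rw [hlogs]; ring
      have : (p - 1) / K * (Real.log S - Real.log s) ≤ Y s ^ (1 - p) - Y S ^ (1 - p) := by
        simp only [hH] at hHS; linarith
      rw [hLL] at this; linarith
    have hsT : s < T := lt_of_le_of_lt hsS hST
    have hYlow : δ * Real.log s ≤ Y s := hlow s hsR₀ hsT
    have hδlog : 0 < δ * Real.log s := by positivity
    have h4 : Y s ^ (1 - p) ≤ (δ * Real.log s) ^ (1 - p) :=
      Real.rpow_le_rpow_of_nonpos hδlog hYlow (by linarith)
    have h5 : (δ * Real.log s) ^ (1 - p) = δ ^ (1 - p) * Real.log s ^ (1 - p) :=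
      Real.mul_rpow hδ.le (by linarith)
    have h6 : Real.log s ^ (1 - p) ≤ 1 :=
      Real.rpow_le_one_of_one_le_of_nonpos hlogs1 (by linarith)
    have h7 : Y s ^ (1 - p) ≤ δ ^ (1 - p) := by
      calc Y s ^ (1 - p) ≤ δ ^ (1 - p) * Real.log s ^ (1 - p) := by rw [← h5]; exact h4
        _ ≤ δ ^ (1 - p) * 1 := by
            apply mul_le_mul_of_nonneg_left h6 (Real.rpow_pos_of_pos hδ _).le
        _ = δ ^ (1 - p) := mul_one _
    have h8 : (p - 1) / K * Real.log s ≤ δ ^ (1 - p) := le_trans hmain h7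
    rw [div_mul_eq_mul_div, div_le_iff₀ hK] at h8
    rw [div_mul_eq_mul_div, le_div_iff₀ hp1]
    nlinarith
  -- pass to the limit S → T
  have hlim : Real.log (Real.sqrt T) ≤ K / (p - 1) * δ ^ (1 - p) := by
    have hcont : Filter.Tendsto (fun S => Real.log (Real.sqrt S)) (nhdsWithin T (Set.Iio T))
        (nhds (Real.log (Real.sqrt T))) := by
      apply Filter.Tendsto.mono_left _ nhdsWithin_le_nhds
      exact ((Real.continuousAt_log (by positivity : Real.sqrt T ≠ 0)).comp
        (Real.continuous_sqrt.continuousAt)).tendsto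
    refine le_of_tendsto hcont ?_
    filter_upwards [Ioo_mem_nhdsLT_of_mem (Set.mem_Ioc.2 ⟨hT, le_refl T⟩)] with S hS
    exact key S hS.1.le hS.2
  constructor
  · rwa [neg_sub]
  · rw [← Real.exp_log hT0]
    apply Real.exp_le_exp.2
    have : Real.log T = 2 * Real.log (Real.sqrt T) := by
      rw [Real.log_sqrt hT0.le]; ring
    rw [this]; linarith
end
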